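/- arXiv:2104.14947 — 9 statements merged into one kernel-verified Lean document; each statement's English description precedes it below -/
import Mathlib

section
/- For every positive integer i, the sum S_2 = \sum_{s=0}^{i-1} s^2\,\binom{2i}{s} equals i(2i+1)\cdot 2^{2i-2} - 3i^2\cdot\binom{2i-1}{i}. -/
/-- Absorption identity: `(k+1)·C(n+1, k+1) = (n+1)·C(n, k)`. -/
lemma aux_absorb (n k : ℕ) : (k+1) * Nat.choose (n+1) (k+1) = (n+1) * Nat.choose n k := by
  have h := Nat.add_one_mul_choose_eq n k
  rw [h]; ring

/-- Half sum of an even binomial row: `2·∑_{t<n} C(2n,t) + C(2n,n) = 2^(2n)`. -/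
lemma half_even (n : ℕ) :
    2 * (∑ t ∈ Finset.range n, Nat.choose (2*n) t) + Nat.choose (2*n) n = 2^(2*n) := by
  have h := Nat.sum_range_choose (2*n)
  have hsplit : ∑ t ∈ Finset.range (2*n+1), Nat.choose (2*n) t
      = (∑ t ∈ Finset.range n, Nat.choose (2*n) t)
        + ∑ t ∈ Finset.Ico n (2*n+1), Nat.choose (2*n) t :=
    (Finset.sum_range_add_sum_Ico _ (by omega)).symm
  have h2 : ∑ t ∈ Finset.Ico n (2*n+1), Nat.choose (2*n) t
      = ∑ u ∈ Finset.range (n+1), Nat.choose (2*n) (n+u) := by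
    rw [Finset.sum_Ico_eq_sum_range]
    apply Finset.sum_congr (by congr 1; omega) (fun _ _ => rfl)
  have h3 : (∑ u ∈ Finset.range (n+1), Nat.choose (2*n) (n+u))
      = ∑ u ∈ Finset.range (n+1), Nat.choose (2*n) (n-u) := by
    apply Finset.sum_congr rfl
    intro u hu
    rw [Finset.mem_range] at hu
    rw [← Nat.choose_symm (show n+u ≤ 2*n by omega)]
    congr 1
    omega
  have h4 : (∑ u ∈ Finset.range (n+1), Nat.choose (2*n) (n-u))
      = ∑ t ∈ Finset.range (n+1), Nat.choose (2*n) t := by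
    have := Finset.sum_range_reflect (fun t => Nat.choose (2*n) t) (n+1)
    simpa using this
  have h5 : (∑ t ∈ Finset.range (n+1), Nat.choose (2*n) t)
      = (∑ t ∈ Finset.range n, Nat.choose (2*n) t) + Nat.choose (2*n) n :=
    Finset.sum_range_succ _ n
  omega

/-- Proposition 2.6 (S₂): for every positive integer `i`,
`∑_{s=0}^{i-1} s²·C(2i, s) = i(2i+1)·2^(2i-2) - 3i²·C(2i-1, i)`. -/
theorem sum_S2 (i : ℕ) (hi : 0 < i) :
    (∑ s ∈ Finset.range i, (s : ℚ) ^ 2 * Nat.choose (2 * i) s) =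
      (i : ℚ) * (2 * i + 1) * 2 ^ (2 * i - 2) - 3 * (i : ℚ) ^ 2 * Nat.choose (2 * i - 1) i := by
  rcases i with _ | _ | m
  · omega
  · norm_num
  -- now the index is `m + 2`
  have e1 : 2 * (m + 1 + 1) - 2 = 2 * m + 2 := by omega
  have e2 : 2 * (m + 1 + 1) - 1 = 2 * m + 3 := by omega
  have e3 : 2 * (m + 1 + 1) = 2 * m + 4 := by omega
  rw [e1, e2, e3]
  have hshift : (∑ s ∈ Finset.range (m+2), (s : ℚ) ^ 2 * Nat.choose (2*m+4) s)
      = (∑ t ∈ Finset.range m, ((t:ℚ)+2) * ((t:ℚ)+1) * Nat.choose (2*m+4) (t+2))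
        + (∑ t ∈ Finset.range (m+1), ((t:ℚ)+1) * Nat.choose (2*m+4) (t+1)) := by
    have step1 : (∑ s ∈ Finset.range (m+2), (s : ℚ) ^ 2 * Nat.choose (2*m+4) s)
        = ∑ t ∈ Finset.range (m+1), ((t:ℚ)+1)^2 * Nat.choose (2*m+4) (t+1) := by
      rw [Finset.sum_range_succ' (fun s => (s : ℚ) ^ 2 * Nat.choose (2*m+4) s) (m+1)]
      push_cast
      norm_num
    have step2 : (∑ t ∈ Finset.range (m+1), ((t:ℚ)+1)^2 * Nat.choose (2*m+4) (t+1))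
        = (∑ t ∈ Finset.range (m+1), ((t:ℚ)+1)*(t:ℚ) * Nat.choose (2*m+4) (t+1))
          + ∑ t ∈ Finset.range (m+1), ((t:ℚ)+1) * Nat.choose (2*m+4) (t+1) := by
      rw [← Finset.sum_add_distrib]
      exact Finset.sum_congr rfl (fun t _ => by ring)
    have step3 : (∑ t ∈ Finset.range (m+1), ((t:ℚ)+1)*(t:ℚ) * Nat.choose (2*m+4) (t+1))
        = ∑ u ∈ Finset.range m, ((u:ℚ)+2)*((u:ℚ)+1) * Nat.choose (2*m+4) (u+2) := by
      rw [Finset.sum_range_succ' (fun t => ((t:ℚ)+1)*(t:ℚ) * Nat.choose (2*m+4) (t+1)) m]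
      push_cast
      norm_num
      exact Finset.sum_congr rfl (fun t _ => by ring)
    rw [step1, step2, step3]
  rw [hshift]
  -- absorption, applied to each summand
  have habs2 : ∀ t : ℕ, ((t:ℚ)+2) * ((t:ℚ)+1) * Nat.choose (2*m+4) (t+2)
      = (2*(m:ℚ)+4) * (2*(m:ℚ)+3) * Nat.choose (2*m+2) t := by
    intro t
    have h1 : (t+2) * Nat.choose (2*m+4) (t+2) = (2*m+4) * Nat.choose (2*m+3) (t+1) := by
      have := aux_absorb (2*m+3) (t+1)
      convert this using 2 <;> omega
    have h2 : (t+1) * Nat.choose (2*m+3) (t+1) = (2*m+3) * Nat.choose (2*m+2) t := by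
      have := aux_absorb (2*m+2) t
      convert this using 2 <;> omega
    have q1 : ((t:ℚ)+2) * Nat.choose (2*m+4) (t+2)
        = (2*(m:ℚ)+4) * Nat.choose (2*m+3) (t+1) := by
      have := congrArg (Nat.cast : ℕ → ℚ) h1
      push_cast at this
      linarith [this]
    have q2 : ((t:ℚ)+1) * Nat.choose (2*m+3) (t+1)
        = (2*(m:ℚ)+3) * Nat.choose (2*m+2) t := by
      have := congrArg (Nat.cast : ℕ → ℚ) h2
      push_cast at this
      linarith [this]
    calc ((t:ℚ)+2) * ((t:ℚ)+1) * Nat.choose (2*m+4) (t+2)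
        = ((t:ℚ)+1) * (((t:ℚ)+2) * Nat.choose (2*m+4) (t+2)) := by ring
      _ = ((t:ℚ)+1) * ((2*(m:ℚ)+4) * Nat.choose (2*m+3) (t+1)) := by rw [q1]
      _ = (2*(m:ℚ)+4) * (((t:ℚ)+1) * Nat.choose (2*m+3) (t+1)) := by ring
      _ = (2*(m:ℚ)+4) * ((2*(m:ℚ)+3) * Nat.choose (2*m+2) t) := by rw [q2]
      _ = _ := by ring
  have habs1 : ∀ t : ℕ, ((t:ℚ)+1) * Nat.choose (2*m+4) (t+1)
      = (2*(m:ℚ)+4) * Nat.choose (2*m+3) t := by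
    intro t
    have h1 : (t+1) * Nat.choose (2*m+4) (t+1) = (2*m+4) * Nat.choose (2*m+3) t := by
      have := aux_absorb (2*m+3) t
      convert this using 2 <;> omega
    have := congrArg (Nat.cast : ℕ → ℚ) h1
    push_cast at this
    linarith [this]
  rw [Finset.sum_congr rfl (fun t _ => habs2 t),
      Finset.sum_congr rfl (fun t _ => habs1 t),
      ← Finset.mul_sum, ← Finset.mul_sum]
  set X : ℚ := ∑ t ∈ Finset.range m, ((Nat.choose (2*m+2) t : ℕ) : ℚ) with hX
  set Y : ℚ := ∑ t ∈ Finset.range (m+1), ((Nat.choose (2*m+3) t : ℕ) : ℚ) with hY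
  -- half-sum facts over ℚ
  have fXnat : 2 * ((∑ t ∈ Finset.range m, Nat.choose (2*m+2) t) + Nat.choose (2*m+2) m)
      + Nat.choose (2*m+2) (m+1) = 2 ^ (2*m+2) := by
    have h := half_even (m+1)
    have h5 : (∑ t ∈ Finset.range (m+1), Nat.choose (2*(m+1)) t)
        = (∑ t ∈ Finset.range m, Nat.choose (2*(m+1)) t) + Nat.choose (2*(m+1)) m :=
      Finset.sum_range_succ _ m
    have e : 2*(m+1) = 2*m+2 := by omega
    rw [e] at h h5
    omega
  have fX : 2 * (X + ((Nat.choose (2*m+2) m : ℕ) : ℚ)) + ((Nat.choose (2*m+2) (m+1) : ℕ) : ℚ)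
      = 2 ^ (2*m+2) := by
    have := congrArg (Nat.cast : ℕ → ℚ) fXnat
    push_cast at this
    rw [hX]
    push_cast
    linarith [this]
  have fYnat : (∑ t ∈ Finset.range (m+1), Nat.choose (2*m+3) t) + Nat.choose (2*m+3) (m+1)
      = 4 ^ (m+1) := by
    have h := Nat.sum_range_choose_halfway (m+1)
    have h5 : (∑ t ∈ Finset.range (m+2), Nat.choose (2*(m+1)+1) t)
        = (∑ t ∈ Finset.range (m+1), Nat.choose (2*(m+1)+1) t) + Nat.choose (2*(m+1)+1) (m+1) :=
      Finset.sum_range_succ _ (m+1)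
    have e : 2*(m+1)+1 = 2*m+3 := by omega
    rw [e] at h h5
    rw [show m+1+1 = m+2 by omega] at h
    omega
  have fY : Y + ((Nat.choose (2*m+3) (m+1) : ℕ) : ℚ) = 4 ^ (m+1) := by
    have := congrArg (Nat.cast : ℕ → ℚ) fYnat
    push_cast at this
    rw [hY]
    push_cast
    linarith [this]
  have f1nat : (2*m+3) * Nat.choose (2*m+2) m = (m+1) * Nat.choose (2*m+3) (m+1) := by
    have := aux_absorb (2*m+2) m
    convert this.symm using 2 <;> omega
  have f1 : (2*(m:ℚ)+3) * ((Nat.choose (2*m+2) m : ℕ) : ℚ)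
      = ((m:ℚ)+1) * ((Nat.choose (2*m+3) (m+1) : ℕ) : ℚ) := by
    have := congrArg (Nat.cast : ℕ → ℚ) f1nat
    push_cast at this
    linarith [this]
  have f2nat : (2*m+3) * Nat.choose (2*m+2) (m+1) = (m+2) * Nat.choose (2*m+3) (m+2) := by
    have := aux_absorb (2*m+2) (m+1)
    convert this.symm using 2 <;> omega
  have f2 : (2*(m:ℚ)+3) * ((Nat.choose (2*m+2) (m+1) : ℕ) : ℚ)
      = ((m:ℚ)+2) * ((Nat.choose (2*m+3) (m+2) : ℕ) : ℚ) := by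
    have := congrArg (Nat.cast : ℕ → ℚ) f2nat
    push_cast at this
    linarith [this]
  have f3 : ((Nat.choose (2*m+3) (m+2) : ℕ) : ℚ) = ((Nat.choose (2*m+3) (m+1) : ℕ) : ℚ) := by
    have h : Nat.choose (2*m+3) (m+2) = Nat.choose (2*m+3) (m+1) := by
      rw [← Nat.choose_symm (show m+1 ≤ 2*m+3 by omega)]
      congr 1
      omega
    exact_mod_cast congrArg (Nat.cast : ℕ → ℚ) h
  have f4 : (4 : ℚ) ^ (m+1) = 2 ^ (2*m+2) := by
    rw [show (4:ℚ) = 2^2 by norm_num, ← pow_mul, show 2*(m+1) = 2*m+2 by omega]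
  push_cast
  linear_combination ((m:ℚ)+2)*(2*(m:ℚ)+3)*fX + (2*(m:ℚ)+4)*fY - 2*((m:ℚ)+2)*f1
    - ((m:ℚ)+2)*f2 + 2*((m:ℚ)+2)^2*f3 + (2*(m:ℚ)+4)*f4
end

section
/- For every positive integer i, the equality \sum_{s=0}^{i-1} s^2\,\binom{2i-1}{s} = \frac{(2i-1)i}{2}\cdot 2^{2i-2} - \frac{(2i-1)i}{2}\cdot\binom{2i-1}{i} holds (as an identity of rational numbers; equivalently, 2\sum_{s=0}^{i-1} s^2\binom{2i-1}{s} = (2i-1)i\cdot\bigl(2^{2i-2} - \binom{2i-1}{i}\bigr)). -/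
open Finset

lemma h1Q (m : ℕ) : ∑ s ∈ range (m+1), ((2*m+1).choose s : ℚ) = 4^m := by
  have := Nat.sum_range_choose_halfway m
  exact_mod_cast congrArg (Nat.cast : ℕ → ℚ) this

lemma h1'Q (m : ℕ) : ∑ s ∈ range m, ((2*m+1).choose s : ℚ) = 4^m - (2*m+1).choose m := by
  have := h1Q m
  rw [Finset.sum_range_succ] at this
  linarith

lemma h2Q (m : ℕ) : ∑ s ∈ range (m+1), ((2*m+2).choose s : ℚ)
    = 2*4^m - ((2*m+2).choose (m+1))/2 := by
  rw [Finset.sum_range_succ']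
  have hsplit : ∀ s : ℕ, ((2*m+2).choose (s+1) : ℚ)
      = (2*m+1).choose s + (2*m+1).choose (s+1) := by
    intro s
    rw [show 2*m+2 = (2*m+1)+1 from rfl, Nat.choose_succ_succ']
    push_cast; ring
  rw [Finset.sum_congr rfl fun s _ => hsplit s, Finset.sum_add_distrib]
  have ha : ∑ s ∈ range m, ((2*m+1).choose s : ℚ) = 4^m - (2*m+1).choose m := h1'Q m
  have hb : ∑ s ∈ range m, ((2*m+1).choose (s+1) : ℚ) = 4^m - 1 := by
    have := h1Q m
    rw [Finset.sum_range_succ'] at this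
    simp at this ⊢
    linarith
  have hmid : ((2*m+2).choose (m+1) : ℚ) = 2 * (2*m+1).choose m := by
    rw [show 2*m+2 = (2*m+1)+1 from rfl, Nat.choose_succ_succ, Nat.choose_symm_half]
    push_cast; ring
  rw [ha, hb, hmid]
  simp; ring

lemma hshift (n s : ℕ) : ((s:ℚ)+1) * (n+1).choose (s+1) = (n+1) * n.choose s := by
  have h := congrArg (Nat.cast : ℕ → ℚ) (Nat.add_one_mul_choose_eq n s)
  push_cast at h
  linarith

lemma hs1Q (m : ℕ) : ∑ s ∈ range (m+1), (s:ℚ) * (2*m+2).choose s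
    = (2*m+2) * (4^m - (2*m+1).choose m) := by
  rw [Finset.sum_range_succ']
  have : ∀ s : ℕ, ((s:ℚ)+1) * (2*m+2).choose (s+1) = (2*m+2) * (2*m+1).choose s := by
    intro s
    have := hshift (2*m+1) s
    push_cast at this ⊢
    linarith
  push_cast
  rw [Finset.sum_congr rfl fun s _ => this s, ← Finset.mul_sum, h1'Q]
  ring

/-- Proposition 2.6 (T₂): for every positive integer `i`,
`∑_{s=0}^{i-1} s²·C(2i-1, s) = (2i-1)i/2 · 2^(2i-2) - (2i-1)i/2 · C(2i-1, i)`. -/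
theorem sum_T2 (i : ℕ) (hi : 0 < i) :
    (∑ s ∈ Finset.range i, (s : ℚ) ^ 2 * Nat.choose (2 * i - 1) s) =
      (2 * (i : ℚ) - 1) * i / 2 * 2 ^ (2 * i - 2) -
        (2 * (i : ℚ) - 1) * i / 2 * Nat.choose (2 * i - 1) i := by
  rcases i with _ | _ | m
  · exact absurd hi (lt_irrefl 0)
  · norm_num
  · have e1 : 2 * (m + 1 + 1) - 1 = 2 * m + 3 := by omega
    have e2 : 2 * (m + 1 + 1) - 2 = 2 * m + 2 := by omega
    simp only [e1, e2]
    rw [Finset.sum_range_succ']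
    have key : ∀ s : ℕ, ((s:ℚ)+1)^2 * (((2*m+3).choose (s+1) : ℕ) : ℚ)
        = (2*(m:ℚ)+3)*((s:ℚ)*(((2*m+2).choose s : ℕ) : ℚ))
          + (2*(m:ℚ)+3)*(((2*m+2).choose s : ℕ) : ℚ) := by
      intro s
      have h := hshift (2*m+2) s
      simp only [show 2*m+2+1 = 2*m+3 from by omega] at h
      push_cast at h
      linear_combination ((s:ℚ)+1) * h
    have hsum : ∑ s ∈ Finset.range (m+1), ((s:ℚ)+1)^2 * (((2*m+3).choose (s+1) : ℕ) : ℚ)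
        = (2*(m:ℚ)+3)*((2*(m:ℚ)+2) * ((4:ℚ)^m - (((2*m+1).choose m : ℕ) : ℚ)))
          + (2*(m:ℚ)+3)*(2*(4:ℚ)^m - (((2*m+2).choose (m+1) : ℕ) : ℚ)/2) := by
      rw [Finset.sum_congr rfl fun s _ => key s, Finset.sum_add_distrib,
        ← Finset.mul_sum, ← Finset.mul_sum, hs1Q, h2Q]
    have r1 : ((m:ℚ)+2) * (((2*m+3).choose (m+2) : ℕ) : ℚ)
        = (2*(m:ℚ)+3) * (((2*m+2).choose (m+1) : ℕ) : ℚ) := by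
      have h := hshift (2*m+2) (m+1)
      simp only [show 2*m+2+1 = 2*m+3 from by omega,
        show m+1+1 = m+2 from by omega] at h
      push_cast at h
      linear_combination h
    have r2 : ((m:ℚ)+1) * (((2*m+2).choose (m+1) : ℕ) : ℚ)
        = (2*(m:ℚ)+2) * (((2*m+1).choose m : ℕ) : ℚ) := by
      have h := hshift (2*m+1) m
      simp only [show 2*m+1+1 = 2*m+2 from by omega] at h
      push_cast at h
      linear_combination h
    have p : (2:ℚ)^(2*m+2) = 4*4^m := by
      rw [show (4:ℚ) = 2^2 by norm_num, ← pow_mul]; ring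
    push_cast
    rw [p, hsum]
    linear_combination ((2*(m:ℚ)+3)/2) * r1 + (2*(m:ℚ)+3) * r2
end

section
/- For every positive integer i, the equality \sum_{s=0}^{i-1} s^3\,\binom{2i-1}{s} = \bigl(i^3 - \tfrac{3}{4}i + \tfrac{1}{4}\bigr)\cdot 2^{2i-2} - \bigl(\tfrac{3}{2}i^3 - i^2\bigr)\cdot\binom{2i-1}{i} holds (as an identity of rational numbers; equivalently, 4\sum_{s=0}^{i-1} s^3\binom{2i-1}{s} = (4i^3 - 3i + 1)\cdot 2^{2i-2} - (6i^3 - 4i^2)\cdot\binom{2i-1}{i}). -/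
open Finset

lemma step1 (n s : ℕ) : ((s:ℚ)+1) * ((n+1).choose (s+1)) = ((n:ℚ)+1) * (n.choose s) := by
  have h := Nat.add_one_mul_choose_eq n s
  have : ((n+1) * n.choose s : ℕ) = ((n+1).choose (s+1) * (s+1) : ℕ) := by
    simpa [Nat.succ_eq_add_one] using h
  have := congrArg (Nat.cast : ℕ → ℚ) this
  push_cast at this
  linarith

lemma even_half (M : ℕ) :
    2 * ∑ t ∈ range M, (2*M).choose t + (2*M).choose M = 4^M := by
  have h : ∑ t ∈ range (2*M+1), (2*M).choose t = 4 ^ M := by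
    rw [Nat.sum_range_choose]
    rw [show 4^M = (2^2)^M by norm_num, ← pow_mul, Nat.mul_comm]
  have hsplit : ∑ t ∈ range (2*M+1), (2*M).choose t
      = (∑ t ∈ range (M+1), (2*M).choose t) + ∑ t ∈ range M, (2*M).choose ((M+1)+t) := by
    rw [show 2*M+1 = (M+1)+M by omega, Finset.sum_range_add]
  have hrefl : ∑ t ∈ range M, (2*M).choose ((M+1)+t) = ∑ t ∈ range M, (2*M).choose t := by
    rw [← Finset.sum_range_reflect (fun t => (2*M).choose ((M+1)+t)) M]
    apply Finset.sum_congr rfl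
    intro t ht
    simp only [Finset.mem_range] at ht
    rw [show (M+1)+(M-1-t) = 2*M - t by omega, Nat.choose_symm (by omega)]
  rw [hsplit, hrefl, Finset.sum_range_succ] at h
  omega

/-- Proposition 2.6 (T₃): for every positive integer `i`,
`∑_{s=0}^{i-1} s³·C(2i-1, s) = (i³ - 3i/4 + 1/4)·2^(2i-2) - (3i³/2 - i²)·C(2i-1, i)`. -/
theorem sum_T3 (i : ℕ) (hi : 0 < i) :
    (∑ s ∈ Finset.range i, (s : ℚ) ^ 3 * Nat.choose (2 * i - 1) s) =
      ((i : ℚ) ^ 3 - 3 / 4 * i + 1 / 4) * 2 ^ (2 * i - 2) -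
        (3 / 2 * (i : ℚ) ^ 3 - (i : ℚ) ^ 2) * Nat.choose (2 * i - 1) i := by
  obtain _|_|_|_|m := i
  · omega
  · norm_num [Finset.sum_range_succ, Nat.choose]
  · norm_num [Finset.sum_range_succ, Nat.choose]
  · norm_num [Finset.sum_range_succ, Nat.choose]
  · -- i = m + 4
    simp only [show 2*(m+4)-1 = 2*m+7 from by omega, show 2*(m+4)-2 = 2*m+6 from by omega]
    -- peel off bottom three terms and shift
    rw [Finset.sum_range_succ', Finset.sum_range_succ', Finset.sum_range_succ']
    -- per-term key identities
    have key : ∀ s : ℕ, ((s:ℚ)+3)^3 * ((2*m+7).choose (s+3)) =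
        (2*(m:ℚ)+7)*(2*m+6)*(2*m+5) * ((2*m+4).choose s)
        + 3*((2*(m:ℚ)+7)*(2*m+6)) * ((2*m+5).choose (s+1))
        + (2*(m:ℚ)+7) * ((2*m+6).choose (s+2)) := by
      intro s
      have A1 : ((s:ℚ)+3) * ((2*m+7).choose (s+3)) = (2*(m:ℚ)+7) * ((2*m+6).choose (s+2)) := by
        have h := step1 (2*m+6) (s+2)
        simp only [show 2*m+6+1 = 2*m+7 from by omega, show s+2+1 = s+3 from by omega] at h
        push_cast at h ⊢
        linarith
      have A2 : ((s:ℚ)+2) * ((2*m+6).choose (s+2)) = (2*(m:ℚ)+6) * ((2*m+5).choose (s+1)) := by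
        have h := step1 (2*m+5) (s+1)
        simp only [show 2*m+5+1 = 2*m+6 from by omega, show s+1+1 = s+2 from by omega] at h
        push_cast at h ⊢
        linarith
      have A3 : ((s:ℚ)+1) * ((2*m+5).choose (s+1)) = (2*(m:ℚ)+5) * ((2*m+4).choose s) := by
        have h := step1 (2*m+4) s
        simp only [show 2*m+4+1 = 2*m+5 from by omega] at h
        push_cast at h ⊢
        linarith
      have hA : ((s:ℚ)+3)*((s:ℚ)+2)*((s:ℚ)+1) * ((2*m+7).choose (s+3))
          = (2*(m:ℚ)+7)*(2*m+6)*(2*m+5) * ((2*m+4).choose s) := by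
        have e1 : ((s:ℚ)+2)*((s:ℚ)+1)*(((s:ℚ)+3) * ((2*m+7).choose (s+3)))
            = ((s:ℚ)+2)*((s:ℚ)+1)*((2*(m:ℚ)+7) * ((2*m+6).choose (s+2))) := by rw [A1]
        have e2 : ((s:ℚ)+1)*((2*(m:ℚ)+7))*(((s:ℚ)+2) * ((2*m+6).choose (s+2)))
            = ((s:ℚ)+1)*((2*(m:ℚ)+7))*((2*(m:ℚ)+6) * ((2*m+5).choose (s+1))) := by rw [A2]
        have e3 : ((2*(m:ℚ)+7))*(2*(m:ℚ)+6)*(((s:ℚ)+1) * ((2*m+5).choose (s+1)))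
            = ((2*(m:ℚ)+7))*(2*(m:ℚ)+6)*((2*(m:ℚ)+5) * ((2*m+4).choose s)) := by rw [A3]
        linear_combination e1 + e2 + e3
      have hB : ((s:ℚ)+3)*((s:ℚ)+2) * ((2*m+7).choose (s+3))
          = (2*(m:ℚ)+7)*(2*m+6) * ((2*m+5).choose (s+1)) := by
        have e1 : ((s:ℚ)+2)*(((s:ℚ)+3) * ((2*m+7).choose (s+3)))
            = ((s:ℚ)+2)*((2*(m:ℚ)+7) * ((2*m+6).choose (s+2))) := by rw [A1]
        have e2 : ((2*(m:ℚ)+7))*(((s:ℚ)+2) * ((2*m+6).choose (s+2)))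
            = ((2*(m:ℚ)+7))*((2*(m:ℚ)+6) * ((2*m+5).choose (s+1))) := by rw [A2]
        linear_combination e1 + e2
      linear_combination hA + 3*hB + A1
    have hsum : ∑ s ∈ range (m+1), ((s+1+1+1 : ℕ) : ℚ)^3 * ((2*m+7).choose (s+1+1+1)) =
        (2*(m:ℚ)+7)*(2*m+6)*(2*m+5) * ∑ s ∈ range (m+1), (((2*m+4).choose s : ℕ) : ℚ)
        + 3*((2*(m:ℚ)+7)*(2*m+6)) * ∑ s ∈ range (m+1), (((2*m+5).choose (s+1) : ℕ) : ℚ)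
        + (2*(m:ℚ)+7) * ∑ s ∈ range (m+1), (((2*m+6).choose (s+2) : ℕ) : ℚ) := by
      rw [Finset.mul_sum, Finset.mul_sum, Finset.mul_sum, ← Finset.sum_add_distrib,
        ← Finset.sum_add_distrib]
      refine Finset.sum_congr rfl fun s _ => ?_
      have h := key s
      rw [show s+1+1+1 = s+3 from rfl]
      push_cast
      linear_combination h
    -- nat sum evaluations
    have hA3 : 2 * (∑ t ∈ range (m+1), (2*m+4).choose t) + 2 * (2*m+4).choose (m+1)
        + (2*m+4).choose (m+2) = 16 * 4^m := by
      have h := even_half (m+2)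
      simp only [show 2*(m+2) = 2*m+4 from by omega] at h
      rw [Finset.sum_range_succ] at h
      rw [show (4:ℕ)^(m+2) = 16*4^m by ring] at h
      omega
    have hA2 : (∑ t ∈ range (m+1), (2*m+5).choose (t+1)) + 1 + (2*m+5).choose (m+2)
        = 16 * 4^m := by
      have h := Nat.sum_range_choose_halfway (m+2)
      simp only [show 2*(m+2)+1 = 2*m+5 from by omega] at h
      rw [Finset.sum_range_succ, Finset.sum_range_succ'] at h
      simp only [Nat.choose_zero_right] at h
      rw [show (4:ℕ)^(m+2) = 16*4^m by ring] at h
      omega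
    have hA1 : 2 * ((∑ t ∈ range (m+1), (2*m+6).choose (t+2)) + (2*m+6) + 1)
        + (2*m+6).choose (m+3) = 64 * 4^m := by
      have h := even_half (m+3)
      simp only [show 2*(m+3) = 2*m+6 from by omega] at h
      rw [Finset.sum_range_succ', Finset.sum_range_succ'] at h
      simp only [Nat.choose_one_right, Nat.choose_zero_right, Nat.zero_add] at h
      rw [show (∑ t ∈ range (m+1), (2*m+6).choose (t+1+1))
          = ∑ t ∈ range (m+1), (2*m+6).choose (t+2) from rfl] at h
      rw [show (4:ℕ)^(m+3) = 64*4^m by ring] at h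
      omega
    -- cast sum evaluations to ℚ and solve for the sums
    have hS3 : (∑ s ∈ range (m+1), (((2*m+4).choose s : ℕ) : ℚ))
        = 8*4^m - ((2*m+4).choose (m+1) : ℚ) - ((2*m+4).choose (m+2) : ℚ)/2 := by
      have h := congrArg (Nat.cast : ℕ → ℚ) hA3
      push_cast at h
      linarith
    have hS2 : (∑ s ∈ range (m+1), (((2*m+5).choose (s+1) : ℕ) : ℚ))
        = 16*4^m - 1 - ((2*m+5).choose (m+2) : ℚ) := by
      have h := congrArg (Nat.cast : ℕ → ℚ) hA2
      push_cast at h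
      linarith
    have hS1 : (∑ s ∈ range (m+1), (((2*m+6).choose (s+2) : ℕ) : ℚ))
        = 32*4^m - ((2*m+6).choose (m+3) : ℚ)/2 - (2*(m:ℚ)+7) := by
      have h := congrArg (Nat.cast : ℕ → ℚ) hA1
      push_cast at h
      linarith
    -- binomial coefficient relations
    have hne2 : (2*(m:ℚ)+5) ≠ 0 := by positivity
    have hne3 : ((m:ℚ)+3) ≠ 0 := by positivity
    have hne4 : ((m:ℚ)+4) ≠ 0 := by positivity
    have hc41 : (((2*m+4).choose (m+1) : ℕ) : ℚ)
        = ((m:ℚ)+2) * ((2*m+5).choose (m+2) : ℚ) / (2*(m:ℚ)+5) := by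
      have h := step1 (2*m+4) (m+1)
      rw [eq_div_iff hne2]
      push_cast at h ⊢
      linarith
    have hc42 : (((2*m+4).choose (m+2) : ℕ) : ℚ)
        = ((m:ℚ)+3) * ((2*m+5).choose (m+2) : ℚ) / (2*(m:ℚ)+5) := by
      have h := step1 (2*m+4) (m+2)
      have hsym : (2*m+5).choose (m+3) = (2*m+5).choose (m+2) := by
        rw [← Nat.choose_symm (show m+2 ≤ 2*m+5 by omega)]
        congr 1
        omega
      rw [show 2*m+4+1 = 2*m+5 from rfl, show m+2+1 = m+3 from rfl, hsym] at h
      rw [eq_div_iff hne2]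
      push_cast at h ⊢
      linarith
    have hc6 : (((2*m+6).choose (m+3) : ℕ) : ℚ)
        = (2*(m:ℚ)+6) * ((2*m+5).choose (m+2) : ℚ) / ((m:ℚ)+3) := by
      have h := step1 (2*m+5) (m+2)
      rw [show 2*m+5+1 = 2*m+6 from rfl, show m+2+1 = m+3 from rfl] at h
      rw [eq_div_iff hne3]
      push_cast at h ⊢
      linarith
    have hc7 : (((2*m+7).choose (m+4) : ℕ) : ℚ)
        = (2*(m:ℚ)+7) * ((2*m+6).choose (m+3) : ℚ) / ((m:ℚ)+4) := by
      have h := step1 (2*m+6) (m+3)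
      rw [show 2*m+6+1 = 2*m+7 from rfl, show m+3+1 = m+4 from rfl] at h
      rw [eq_div_iff hne4]
      push_cast at h ⊢
      linarith
    have hC2 : (((2*m+7).choose 2 : ℕ) : ℚ) = (2*(m:ℚ)+7)*(2*(m:ℚ)+6)/2 := by
      have h := step1 (2*m+6) 1
      rw [show 2*m+6+1 = 2*m+7 from rfl, show (1:ℕ)+1 = 2 from rfl,
        Nat.choose_one_right] at h
      push_cast at h ⊢
      linarith
    have hC1 : (((2*m+7).choose 1 : ℕ) : ℚ) = 2*(m:ℚ)+7 := by
      rw [Nat.choose_one_right]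
      push_cast
      ring
    have hpow : (2:ℚ)^(2*m+6) = 4^m * 64 := by
      rw [pow_add, pow_mul]
      norm_num
    rw [hsum, hS3, hS2, hS1, hc41, hc42, hc7, hc6, hC2, hC1, hpow]
    push_cast
    field_simp
    ring
end

section
/- Let m, n be positive integers with m \neq n and m + n = 2k even. Then there is no transitive triple (\sigma_1, \sigma_2, \sigma_3) in S_{2k} with \sigma_1 \circ \sigma_2 = \sigma_3 such that \sigma_1 has cycle type (m, n), and \sigma_2 and \sigma_3 are fixed-point-free involutions, i.e. have cycle type (2, 2, \ldots, 2) consisting of k transpositions. In particular the number of such triples up to simultaneous conjugation is 0. -/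
/-- The cycle type of a permutation of `Fin d` *including fixed points as parts equal
to 1*: the partition of `d` formed by the lengths of all cycles of `σ`. -/
def fullCycleType {d : ℕ} (σ : Equiv.Perm (Fin d)) : Multiset ℕ :=
  σ.cycleType + Multiset.replicate (d - σ.cycleType.sum) 1

/-- The subgroup generated by `σ₁` and `σ₂` acts transitively on the `d` letters. -/
def IsTransitivePair {d : ℕ} (σ₁ σ₂ : Equiv.Perm (Fin d)) : Prop :=
  ∀ x y : Fin d, ∃ τ ∈ Subgroup.closure ({σ₁, σ₂} : Set (Equiv.Perm (Fin d))), τ x = y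

/-- Transitive triples `(σ₁, σ₂, σ₃)` in `S_d` with `σ₁ ∘ σ₂ = σ₃` and prescribed
cycle types `t₁, t₂, t₃` (fixed points included as parts equal to 1). -/
def HurwitzTriples (d : ℕ) (t₁ t₂ t₃ : Multiset ℕ) :
    Set (Equiv.Perm (Fin d) × Equiv.Perm (Fin d) × Equiv.Perm (Fin d)) :=
  {p | p.1 * p.2.1 = p.2.2 ∧ fullCycleType p.1 = t₁ ∧ fullCycleType p.2.1 = t₂ ∧
    fullCycleType p.2.2 = t₃ ∧ IsTransitivePair p.1 p.2.1}

/-- Simultaneous conjugation of triples: `(σ₁,σ₂,σ₃) ∼ (τσ₁τ⁻¹, τσ₂τ⁻¹, τσ₃τ⁻¹)`. -/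
def SimConj {d : ℕ} (S : Set (Equiv.Perm (Fin d) × Equiv.Perm (Fin d) × Equiv.Perm (Fin d)))
    (p q : S) : Prop :=
  ∃ τ : Equiv.Perm (Fin d),
    q.1.1 = τ * p.1.1 * τ⁻¹ ∧ q.1.2.1 = τ * p.1.2.1 * τ⁻¹ ∧ q.1.2.2 = τ * p.1.2.2 * τ⁻¹

/-- A permutation whose full cycle type consists only of `2`s is an involution. -/
lemma aux_sq {d : ℕ} (σ : Equiv.Perm (Fin d)) (kk : ℕ)
    (h : fullCycleType σ = Multiset.replicate kk 2) : σ * σ = 1 := by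
  have hdvd : orderOf σ ∣ 2 := by
    rw [← Equiv.Perm.lcm_cycleType]
    refine Multiset.lcm_dvd.2 fun a ha => ?_
    have h2 : a ∈ fullCycleType σ := by
      unfold fullCycleType; exact Multiset.mem_add.2 (Or.inl ha)
    rw [h] at h2
    rw [Multiset.eq_of_mem_replicate h2]
  have h2 := orderOf_dvd_iff_pow_eq_one.mp hdvd
  rwa [pow_two] at h2

/-- Every part of the full cycle type is realized as the order of some `cycleOf`. -/
lemma aux_exists {d : ℕ} (σ : Equiv.Perm (Fin d)) (a : ℕ)
    (ha : a ∈ fullCycleType σ) : ∃ x : Fin d, orderOf (σ.cycleOf x) = a := by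
  unfold fullCycleType at ha
  rcases Multiset.mem_add.mp ha with h | h
  · rw [Equiv.Perm.cycleType_def, Multiset.mem_map] at h
    obtain ⟨c, hc, hca⟩ := h
    have hc' : c ∈ σ.cycleFactorsFinset := hc
    have hcyc : c.IsCycle := (Equiv.Perm.mem_cycleFactorsFinset_iff.mp hc').1
    obtain ⟨x, hx, -⟩ := id hcyc
    have hxs : x ∈ c.support := by rwa [Equiv.Perm.mem_support]
    refine ⟨x, ?_⟩
    rw [← Equiv.Perm.cycle_is_cycleOf hxs hc', Equiv.Perm.IsCycle.orderOf hcyc]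
    exact hca
  · obtain ⟨hne, ha1⟩ := Multiset.mem_replicate.mp h
    have hlt : σ.support.card < d := by
      rw [← Equiv.Perm.sum_cycleType]; omega
    obtain ⟨x, hx⟩ : ∃ x : Fin d, x ∉ σ.support := by
      by_contra hall
      push_neg at hall
      have := Finset.eq_univ_iff_forall.mpr hall
      rw [this, Finset.card_univ, Fintype.card_fin] at hlt
      omega
    refine ⟨x, ?_⟩
    rw [(Equiv.Perm.cycleOf_eq_one_iff σ).mpr (Equiv.Perm.notMem_support.mp hx),
      orderOf_one, ha1]

/-- `cycleOf` commutes with conjugation. -/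
lemma aux_cycleOf_conj {d : ℕ} (σ τ : Equiv.Perm (Fin d)) (x : Fin d) :
    (τ * σ * τ⁻¹).cycleOf (τ x) = τ * σ.cycleOf x * τ⁻¹ := by
  ext y
  have hsc : (τ * σ * τ⁻¹).SameCycle (τ x) y ↔ σ.SameCycle x (τ⁻¹ y) := by
    rw [Equiv.Perm.sameCycle_conj, Equiv.Perm.inv_def, Equiv.symm_apply_apply]
  by_cases h : σ.SameCycle x (τ⁻¹ y)
  · rw [Equiv.Perm.cycleOf_apply, if_pos (hsc.mpr h)]
    simp only [Equiv.Perm.mul_apply, Equiv.Perm.cycleOf_apply, if_pos h]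
  · rw [Equiv.Perm.cycleOf_apply, if_neg (fun hh => h (hsc.mp hh))]
    simp only [Equiv.Perm.mul_apply, Equiv.Perm.cycleOf_apply, if_neg h,
      Equiv.apply_symm_apply]
    rw [← Equiv.Perm.mul_apply, mul_inv_cancel, Equiv.Perm.one_apply]

/-- Proposition 2.3, row 1: for `m ≠ n` with `m + n = 2k`, there is no transitive
triple `(σ₁, σ₂, σ₃)` in `S_{2k}` with `σ₁σ₂ = σ₃`, `σ₁` of cycle type `(m, n)` and
`σ₂, σ₃` fixed-point-free involutions; in particular the number of such triples up to
simultaneous conjugation is `0`. -/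
theorem hurwitz_count_row1 (m n k : ℕ) (hm : 0 < m) (hn : 0 < n) (hmn : m ≠ n)
    (hk : m + n = 2 * k) :
    HurwitzTriples (2 * k) {m, n} (Multiset.replicate k 2) (Multiset.replicate k 2) = ∅ ∧
    Nat.card (Quot (SimConj
      (HurwitzTriples (2 * k) {m, n} (Multiset.replicate k 2) (Multiset.replicate k 2)))) = 0 := by
  have hempty : HurwitzTriples (2 * k) {m, n} (Multiset.replicate k 2)
      (Multiset.replicate k 2) = ∅ := by
    rw [Set.eq_empty_iff_forall_notMem]
    rintro ⟨σ₁, σ₂, σ₃⟩ ⟨hmul, h1, h2, h3, htrans⟩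
    dsimp only at hmul h1 h2 h3 htrans
    have hs2 : σ₂ * σ₂ = 1 := aux_sq σ₂ k h2
    have hs3 : σ₃ * σ₃ = 1 := aux_sq σ₃ k h3
    have h2inv : σ₂⁻¹ = σ₂ := inv_eq_of_mul_eq_one_left hs2
    have h3inv : σ₃⁻¹ = σ₃ := inv_eq_of_mul_eq_one_left hs3
    have h13 : σ₁ = σ₃ * σ₂ := by
      rw [← hmul, mul_assoc, hs2, mul_one]
    have hconj : σ₁ = σ₂ * σ₁⁻¹ * σ₂⁻¹ := by
      rw [h13, mul_inv_rev, h2inv, h3inv, ← mul_assoc, hs2, one_mul]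
    -- the invariant: the length of the σ₁-cycle through a point
    set c : Fin (2 * k) → ℕ := fun x => orderOf (σ₁.cycleOf x) with hc
    have hc1 : ∀ x, c (σ₁ x) = c x := by
      intro x; simp only [hc, Equiv.Perm.cycleOf_self_apply]
    have hc2 : ∀ x, c (σ₂ x) = c x := by
      intro x
      have key : σ₁.cycleOf (σ₂ x) = σ₂ * (σ₁.cycleOf x)⁻¹ * σ₂⁻¹ := by
        conv_lhs => rw [hconj]
        rw [aux_cycleOf_conj σ₁⁻¹ σ₂ x, Equiv.Perm.cycleOf_inv]
        congr!
      simp only [hc, key]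
      have hsemi : SemiconjBy σ₂ ((σ₁.cycleOf x)⁻¹) (σ₂ * (σ₁.cycleOf x)⁻¹ * σ₂⁻¹) := by
        unfold SemiconjBy
        group
      rw [← hsemi.orderOf_eq σ₂, orderOf_inv]
    have hinv : ∀ τ ∈ Subgroup.closure ({σ₁, σ₂} : Set (Equiv.Perm (Fin (2 * k)))),
        ∀ x, c (τ x) = c x := by
      intro τ hτ
      induction hτ using Subgroup.closure_induction with
      | mem g hg =>
        rcases hg with rfl | rfl
        · exact hc1
        · exact hc2
      | one => intro x; rfl
      | mul g h _ _ hg hh => intro x; rw [Equiv.Perm.mul_apply, hg, hh]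
      | inv g _ hg =>
        intro x
        have h := hg (g⁻¹ x)
        rw [← Equiv.Perm.mul_apply, mul_inv_cancel, Equiv.Perm.one_apply] at h
        exact h.symm
    -- get points on the m-cycle and the n-cycle
    obtain ⟨x, hx⟩ := aux_exists σ₁ m (by rw [h1]; exact Multiset.mem_cons_self m _)
    obtain ⟨y, hy⟩ := aux_exists σ₁ n (by
      rw [h1]; exact Multiset.mem_cons_of_mem (Multiset.mem_singleton_self n))
    obtain ⟨τ, hτ, hτxy⟩ := htrans x y
    have : m = n := by
      rw [← hx, ← hy, ← hτxy]
      exact (hinv τ hτ x).symm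
    exact hmn this
  refine ⟨hempty, ?_⟩
  rw [hempty]
  have hie : IsEmpty (Quot (SimConj (∅ : Set (Equiv.Perm (Fin (2 * k)) ×
      Equiv.Perm (Fin (2 * k)) × Equiv.Perm (Fin (2 * k)))))) := by
    constructor
    intro q
    induction q using Quot.ind with
    | _ p => exact absurd p.2 (Set.notMem_empty _)
  exact Nat.card_of_isEmpty
end

section
/- Let k be a positive integer. The number of simultaneous-conjugacy classes of transitive triples (\sigma_1, \sigma_2, \sigma_3) in S_{2k} with \sigma_1 \circ \sigma_2 = \sigma_3 such that \sigma_1 has cycle type (k, k), and \sigma_2 and \sigma_3 are fixed-point-free involutions, i.e. have cycle type (2, 2, \ldots, 2) consisting of k transpositions, equals 1. -/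
namespace HurwitzRow2

open Equiv Equiv.Perm

lemma pow_eq_pow_zmod {G : Type*} [Group G] {g : G} {k m n : ℕ} (hg : g ^ k = 1)
    (h : (m : ZMod k) = (n : ZMod k)) : g ^ m = g ^ n := by
  rw [pow_eq_pow_iff_modEq]
  exact ((ZMod.natCast_eq_natCast_iff _ _ _).mp h).of_dvd (orderOf_dvd_of_pow_eq_one hg)

/-- standard rotation on `ZMod k × Bool` -/
def s1 (k : ℕ) : Equiv.Perm (ZMod k × Bool) :=
  (Equiv.addRight (1 : ZMod k)).prodCongr (Equiv.refl Bool)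

/-- standard reflection on `ZMod k × Bool` -/
def s2 (k : ℕ) : Equiv.Perm (ZMod k × Bool) :=
  Function.Involutive.toPerm (fun p => (-p.1, !p.2)) (fun p => by simp)

@[simp] lemma s1_apply {k : ℕ} (p : ZMod k × Bool) : s1 k p = (p.1 + 1, p.2) := rfl
@[simp] lemma s2_apply {k : ℕ} (p : ZMod k × Bool) : s2 k p = (-p.1, !p.2) := rfl

lemma cycleType_permCongr {α β : Type*} [Fintype α] [DecidableEq α] [Fintype β]
    [DecidableEq β] (e : α ≃ β) (σ : Equiv.Perm α) :
    (e.permCongr σ).cycleType = σ.cycleType := by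
  have h : e.permCongr σ
      = σ.extendDomain (e.trans (Equiv.subtypeUnivEquiv (fun _ : β => trivial)).symm) := by
    ext b
    rw [Equiv.Perm.extendDomain_apply_subtype _ _ trivial]
    simp
  rw [h, Equiv.Perm.cycleType_extendDomain]

lemma permCongr_mul {α β : Type*} (e : α ≃ β) (f g : Equiv.Perm α) :
    e.permCongr f * e.permCongr g = e.permCongr (f * g) := by
  refine Equiv.ext fun x => ?_
  simp [Equiv.permCongr_apply, Equiv.Perm.mul_apply]

section model

variable {G : Type*} [Group G] {k : ℕ} [NeZero k] {g s : G}
  (h1 : g ^ k = 1) (h2 : s * s = 1) (h3 : s * g * s = g⁻¹)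

/-- the word `g ^ i * s ^ e` -/
def T (g s : G) (i : ZMod k) (e : Bool) : G := g ^ i.val * s ^ (cond e 1 0)

include h1 in
lemma psi_add (i j : ZMod k) : g ^ (i + j).val = g ^ i.val * g ^ j.val := by
  rw [← pow_add]
  refine pow_eq_pow_zmod h1 ?_
  push_cast [ZMod.natCast_val, ZMod.cast_id]
  rfl

include h1 in
lemma psi_inv (i : ZMod k) : (g ^ i.val)⁻¹ = g ^ (-i).val := by
  have h := psi_add h1 (-i) i
  rw [neg_add_cancel, ZMod.val_zero, pow_zero] at h
  exact (eq_inv_of_mul_eq_one_left h.symm).symm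

include h2 h3 in
lemma swap_pow (n : ℕ) : s * g ^ n = (g ^ n)⁻¹ * s := by
  have hsinv : s⁻¹ = s := inv_eq_of_mul_eq_one_right h2
  have hc : s * g ^ n * s⁻¹ = (g ^ n)⁻¹ := by
    rw [← inv_pow, ← conj_pow]
    congr 1
    rw [hsinv]
    exact h3
  calc s * g ^ n = s * g ^ n * s⁻¹ * s := by group
  _ = (g ^ n)⁻¹ * s := by rw [hc]

include h1 h2 h3 in
lemma T_mul (i j : ZMod k) (e f : Bool) :
    T g s i e * T g s j f = T g s (i + cond e (-j) j) (xor e f) := by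
  cases e <;> cases f <;>
    simp only [T, cond_true, cond_false, pow_one, pow_zero, mul_one, Bool.xor_false,
      Bool.xor_true, Bool.false_xor, Bool.true_xor, Bool.not_true, Bool.not_false]
  · rw [psi_add h1]
  · rw [psi_add h1]; group
  · rw [psi_add h1, ← psi_inv h1, mul_assoc, swap_pow h2 h3, ← mul_assoc]
  · rw [psi_add h1, ← psi_inv h1]
    calc g ^ i.val * s * (g ^ j.val * s)
        = g ^ i.val * (s * g ^ j.val) * s := by group
    _ = g ^ i.val * ((g ^ j.val)⁻¹ * s) * s := by rw [swap_pow h2 h3]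
    _ = g ^ i.val * (g ^ j.val)⁻¹ * (s * s) := by group
    _ = g ^ i.val * (g ^ j.val)⁻¹ := by rw [h2, mul_one]

include h1 h2 h3 in
lemma T_inv (i : ZMod k) (e : Bool) : (T g s i e)⁻¹ = T g s (cond e i (-i)) e := by
  cases e <;>
    simp only [T, cond_true, cond_false, pow_one, pow_zero, mul_one]
  · exact psi_inv h1 i
  · rw [mul_inv_rev, inv_eq_of_mul_eq_one_right h2, psi_inv h1, swap_pow h2 h3,
      psi_inv h1, neg_neg]

include h1 in
lemma T_one_false : T g s (1 : ZMod k) false = g := by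
  simp only [T, cond_false, pow_zero, mul_one]
  refine pow_eq_pow_zmod h1 (n := 1) ?_ |>.trans (pow_one g)
  push_cast [ZMod.natCast_val, ZMod.cast_id]
  rfl

omit [NeZero k] in
lemma T_zero_true : T g s (0 : ZMod k) true = s := by
  simp [T, ZMod.val_zero]

omit [NeZero k] in
lemma T_zero_false : T g s (0 : ZMod k) false = 1 := by
  simp [T, ZMod.val_zero]

include h1 h2 h3 in
lemma mem_closure_T {τ : G} (hτ : τ ∈ Subgroup.closure ({g, s} : Set G)) :
    ∃ (i : ZMod k) (e : Bool), τ = T g s i e := by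
  induction hτ using Subgroup.closure_induction with
  | mem x hx =>
    rcases hx with rfl | rfl
    · exact ⟨1, false, (T_one_false h1).symm⟩
    · exact ⟨0, true, T_zero_true.symm⟩
  | one => exact ⟨0, false, T_zero_false.symm⟩
  | mul x y hx hy ihx ihy =>
    obtain ⟨i, e, rfl⟩ := ihx
    obtain ⟨j, f, rfl⟩ := ihy
    exact ⟨_, _, T_mul h1 h2 h3 i j e f⟩
  | inv x hx ihx =>
    obtain ⟨i, e, rfl⟩ := ihx
    exact ⟨_, _, T_inv h1 h2 h3 i e⟩

end model

/-- every triple satisfying the relations and transitivity is conjugate to the model -/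
lemma exists_equiv {k : ℕ} [NeZero k] {σ₁ σ₂ : Equiv.Perm (Fin (2 * k))}
    (h1 : σ₁ ^ k = 1) (h2 : σ₂ * σ₂ = 1) (h3 : σ₂ * σ₁ * σ₂ = σ₁⁻¹)
    (ht : IsTransitivePair σ₁ σ₂) :
    ∃ E : (ZMod k × Bool) ≃ Fin (2 * k),
      σ₁ = E.permCongr (s1 k) ∧ σ₂ = E.permCongr (s2 k) := by
  have hk : 0 < k := Nat.pos_of_ne_zero (NeZero.ne k)
  have hpos : 0 < 2 * k := by omega
  let x0 : Fin (2 * k) := ⟨0, hpos⟩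
  let f : ZMod k × Bool → Fin (2 * k) := fun z => T σ₁ σ₂ z.1 z.2 x0
  have hsurj : Function.Surjective f := by
    intro y
    obtain ⟨τ, hmem, hτ⟩ := ht x0 y
    obtain ⟨i, e, rfl⟩ := mem_closure_T h1 h2 h3 hmem
    exact ⟨(i, e), hτ⟩
  have hbij : Function.Bijective f := by
    rw [Fintype.bijective_iff_surjective_and_card]
    refine ⟨hsurj, ?_⟩
    simp [ZMod.card]
    ring
  let E : (ZMod k × Bool) ≃ Fin (2 * k) := Equiv.ofBijective f hbij
  have he1 : ∀ z, σ₁ (E z) = E (s1 k z) := by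
    rintro ⟨i, e⟩
    have : σ₁ * T σ₁ σ₂ i e = T σ₁ σ₂ (i + 1) e := by
      have hm := T_mul h1 h2 h3 (1 : ZMod k) i false e
      rw [T_one_false h1] at hm
      simpa [add_comm] using hm
    calc σ₁ (E (i, e)) = (σ₁ * T σ₁ σ₂ i e) x0 := rfl
    _ = T σ₁ σ₂ (i + 1) e x0 := by rw [this]
    _ = E (s1 k (i, e)) := rfl
  have he2 : ∀ z, σ₂ (E z) = E (s2 k z) := by
    rintro ⟨i, e⟩
    have : σ₂ * T σ₁ σ₂ i e = T σ₁ σ₂ (-i) (!e) := by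
      have hm := T_mul h1 h2 h3 (0 : ZMod k) i true e
      rw [T_zero_true] at hm
      simpa using hm
    calc σ₂ (E (i, e)) = (σ₂ * T σ₁ σ₂ i e) x0 := rfl
    _ = T σ₁ σ₂ (-i) (!e) x0 := by rw [this]
    _ = E (s2 k (i, e)) := rfl
  refine ⟨E, Equiv.ext fun x => ?_, Equiv.ext fun x => ?_⟩
  · have := he1 (E.symm x)
    rw [E.apply_symm_apply] at this
    rw [Equiv.permCongr_apply]
    exact this.symm ▸ rfl
  · have := he2 (E.symm x)
    rw [E.apply_symm_apply] at this
    rw [Equiv.permCongr_apply]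
    exact this.symm ▸ rfl

lemma pow_eq_one_of_parts {d k : ℕ} {σ : Equiv.Perm (Fin d)}
    (h : ∀ a ∈ σ.cycleType, a ∣ k) : σ ^ k = 1 := by
  rw [← orderOf_dvd_iff_pow_eq_one, ← Equiv.Perm.lcm_cycleType]
  exact Multiset.lcm_dvd.mpr h

lemma parts_mem {d : ℕ} {σ : Equiv.Perm (Fin d)} {t : Multiset ℕ}
    (h : fullCycleType σ = t) {a : ℕ} (ha : a ∈ σ.cycleType) : a ∈ t := by
  rw [← h, fullCycleType]
  exact Multiset.mem_of_le (Multiset.le_add_right _ _) ha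

lemma pow_k_eq_one {d k : ℕ} {σ : Equiv.Perm (Fin d)}
    (h : fullCycleType σ = {k, k}) : σ ^ k = 1 := by
  refine pow_eq_one_of_parts fun a ha => ?_
  have := parts_mem h ha
  simp only [Multiset.insert_eq_cons, Multiset.mem_cons, Multiset.mem_singleton] at this
  rcases this with rfl | rfl <;> rfl

lemma sq_eq_one {d k : ℕ} {σ : Equiv.Perm (Fin d)}
    (h : fullCycleType σ = Multiset.replicate k 2) : σ * σ = 1 := by
  have h2 : σ ^ 2 = 1 := by
    refine pow_eq_one_of_parts fun a ha => ?_
    have := Multiset.eq_of_mem_replicate (parts_mem h ha)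
    rw [this]
  rwa [pow_two] at h2

/-- fixed-point-free involutions have fullCycleType consisting of 2's -/
lemma fullCycleType_involution {d c : ℕ} (hd : d = 2 * c) (σ : Equiv.Perm (Fin d))
    (h2 : σ * σ = 1) (hfp : ∀ x, σ x ≠ x) :
    fullCycleType σ = Multiset.replicate c 2 := by
  have horder : orderOf σ ∣ 2 := orderOf_dvd_of_pow_eq_one (by rwa [pow_two])
  have hparts : ∀ a ∈ σ.cycleType, a = 2 := by
    intro a ha
    refine le_antisymm (Nat.le_of_dvd two_pos ?_) (Equiv.Perm.two_le_of_mem_cycleType ha)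
    exact (Multiset.dvd_lcm ha).trans (by rw [Equiv.Perm.lcm_cycleType]; exact horder)
  have hrep : σ.cycleType = Multiset.replicate (Multiset.card σ.cycleType) 2 :=
    Multiset.eq_replicate_card.mpr hparts
  have hsupp : σ.support = Finset.univ := by
    ext x; simp [Equiv.Perm.mem_support, hfp x]
  have hsum : σ.cycleType.sum = d := by
    rw [Equiv.Perm.sum_cycleType, hsupp, Finset.card_univ, Fintype.card_fin]
  have hcard : Multiset.card σ.cycleType = c := by
    have h' := hsum
    rw [hrep, Multiset.sum_replicate, smul_eq_mul] at h'
    omega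
  rw [fullCycleType, hsum, Nat.sub_self, Multiset.replicate_zero, add_zero, hrep, hcard]

section cyc
variable {k : ℕ} [NeZero k]

omit [NeZero k] in
lemma addRight_pow (n : ℕ) : ∀ z : ZMod k, ((Equiv.addRight (1 : ZMod k)) ^ n) z = z + n := by
  induction n with
  | zero => simp
  | succ m ih =>
    intro z
    rw [pow_succ, Equiv.Perm.mul_apply, ih]
    push_cast
    simp only [Equiv.coe_addRight]
    ring

lemma isCycle_addRight (hk2 : 2 ≤ k) : (Equiv.addRight (1 : ZMod k)).IsCycle := by
  haveI : Fact (1 < k) := ⟨hk2⟩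
  refine ⟨0, by simp, fun y _ => ⟨(y.val : ℤ), ?_⟩⟩
  rw [zpow_natCast, addRight_pow]
  simp [ZMod.natCast_val, ZMod.cast_id]

lemma support_addRight (hk2 : 2 ≤ k) :
    (Equiv.addRight (1 : ZMod k)).support = Finset.univ := by
  haveI : Fact (1 < k) := ⟨hk2⟩
  ext x
  simp only [Equiv.Perm.mem_support, Finset.mem_univ, iff_true]
  intro h
  simp only [Equiv.coe_addRight] at h
  exact one_ne_zero (add_left_cancel (a := x) (by rw [add_zero]; exact h))

/-- embedding of `ZMod k` as a fiber -/
def fiber (b : Bool) : ZMod k ≃ {p : ZMod k × Bool // p.2 = b} where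
  toFun i := ⟨(i, b), rfl⟩
  invFun s := s.1.1
  left_inv i := rfl
  right_inv := fun ⟨⟨i, b'⟩, hb⟩ => by subst hb; rfl

lemma cycleType_s1 (hk2 : 2 ≤ k) : (s1 k).cycleType = {k, k} := by
  haveI : Fact (1 < k) := ⟨hk2⟩
  set c0 := Equiv.addRight (1 : ZMod k) with hc0
  let cf := c0.extendDomain (fiber (k := k) false)
  let ct := c0.extendDomain (fiber (k := k) true)
  have happf : ∀ i : ZMod k, cf (i, false) = (i + 1, false) := by
    intro i
    have := Equiv.Perm.extendDomain_apply_subtype c0 (fiber (k := k) false)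
      (show ((i, false) : ZMod k × Bool).2 = false from rfl)
    exact this
  have happt : ∀ i : ZMod k, ct (i, true) = (i + 1, true) := by
    intro i
    have := Equiv.Perm.extendDomain_apply_subtype c0 (fiber (k := k) true)
      (show ((i, true) : ZMod k × Bool).2 = true from rfl)
    exact this
  have hfixf : ∀ i : ZMod k, cf (i, true) = (i, true) := fun i =>
    Equiv.Perm.extendDomain_apply_not_subtype c0 (fiber (k := k) false) (by simp)
  have hfixt : ∀ i : ZMod k, ct (i, false) = (i, false) := fun i =>
    Equiv.Perm.extendDomain_apply_not_subtype c0 (fiber (k := k) true) (by simp)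
  have hprod : s1 k = cf * ct := by
    refine Equiv.ext fun p => ?_
    obtain ⟨i, b⟩ := p
    cases b
    · rw [Equiv.Perm.mul_apply, hfixt, happf]; rfl
    · rw [Equiv.Perm.mul_apply, happt, hfixf]; rfl
  have hdisj : Equiv.Perm.Disjoint cf ct := by
    rintro ⟨i, b⟩
    cases b
    · exact Or.inr (hfixt i)
    · exact Or.inl (hfixf i)
  have hcyc : c0.IsCycle := isCycle_addRight hk2
  have hcardsupp : c0.support.card = k := by
    rw [support_addRight hk2, Finset.card_univ, ZMod.card]
  have hctype : c0.cycleType = {k} := by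
    rw [hcyc.cycleType, hcardsupp]
  have hcf : cf.cycleType = {k} := by
    rw [Equiv.Perm.cycleType_extendDomain, hctype]
  have hct : ct.cycleType = {k} := by
    rw [Equiv.Perm.cycleType_extendDomain, hctype]
  rw [hprod, Equiv.Perm.Disjoint.cycleType_mul hdisj, hcf, hct]
  rfl

end cyc

lemma bool_flip {a b : Bool} (h : a ≠ b) : (!a) = b := by
  cases a <;> cases b <;> simp_all

lemma s12_invol {k : ℕ} (p : ZMod k × Bool) : (s1 k * s2 k) ((s1 k * s2 k) p) = p := by
  obtain ⟨i, b⟩ := p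
  simp only [Equiv.Perm.mul_apply, s1_apply, s2_apply]
  refine Prod.ext ?_ ?_
  · show -(-i + 1) + 1 = i
    ring
  · simp

lemma s1_one_eq : s1 1 = 1 := by
  refine Equiv.ext fun p => ?_
  obtain ⟨i, b⟩ := p
  simp only [s1_apply, Equiv.Perm.one_apply]
  exact Prod.ext (Subsingleton.elim _ _) rfl

/-- the structure theorem for members -/
lemma mem_structure {k : ℕ} (hk : 0 < k) [NeZero k]
    {p : Equiv.Perm (Fin (2 * k)) × Equiv.Perm (Fin (2 * k)) × Equiv.Perm (Fin (2 * k))}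
    (hp : p ∈ HurwitzTriples (2 * k) {k, k} (Multiset.replicate k 2) (Multiset.replicate k 2)) :
    ∃ E : (ZMod k × Bool) ≃ Fin (2 * k),
      p.1 = E.permCongr (s1 k) ∧ p.2.1 = E.permCongr (s2 k) := by
  obtain ⟨hmul, ht1, ht2, ht3, htr⟩ := hp
  have h1 : p.1 ^ k = 1 := pow_k_eq_one ht1
  have h2 : p.2.1 * p.2.1 = 1 := sq_eq_one ht2
  have h33 : (p.1 * p.2.1) * (p.1 * p.2.1) = 1 := by
    rw [hmul]; exact sq_eq_one ht3
  have h3 : p.2.1 * p.1 * p.2.1 = p.1⁻¹ := by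
    refine (eq_inv_of_mul_eq_one_right ?_)
    calc p.1 * (p.2.1 * p.1 * p.2.1) = (p.1 * p.2.1) * (p.1 * p.2.1) := by group
    _ = 1 := h33
  exact exists_equiv h1 h2 h3 htr

/-- existence of a standard triple -/
lemma exists_triple (k : ℕ) (hk : 0 < k) [NeZero k] :
    (HurwitzTriples (2 * k) {k, k} (Multiset.replicate k 2)
      (Multiset.replicate k 2)).Nonempty := by
  have hcard : Fintype.card (ZMod k × Bool) = Fintype.card (Fin (2 * k)) := by
    simp [ZMod.card]
    ring
  let e0 : (ZMod k × Bool) ≃ Fin (2 * k) := Fintype.equivOfCardEq hcard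
  let σ₁ : Equiv.Perm (Fin (2 * k)) := e0.permCongr (s1 k)
  let σ₂ : Equiv.Perm (Fin (2 * k)) := e0.permCongr (s2 k)
  refine ⟨(σ₁, σ₂, σ₁ * σ₂), rfl, ?_, ?_, ?_, ?_⟩
  · -- fullCycleType σ₁ = {k, k}
    show fullCycleType σ₁ = {k, k}
    have hct : σ₁.cycleType = (s1 k).cycleType := cycleType_permCongr e0 (s1 k)
    rcases eq_or_lt_of_le (show 1 ≤ k from hk) with hk1 | hk2
    · -- k = 1
      have hk1' : k = 1 := hk1.symm
      subst hk1'
      rw [fullCycleType, hct, s1_one_eq, Equiv.Perm.cycleType_one]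
      rfl
    · rw [fullCycleType, hct, cycleType_s1 hk2]
      have hsum : ({k, k} : Multiset ℕ).sum = 2 * k := by
        simp [Multiset.insert_eq_cons]
        ring
      rw [hsum, Nat.sub_self, Multiset.replicate_zero, add_zero]
  · -- fullCycleType σ₂ = replicate k 2
    show fullCycleType σ₂ = Multiset.replicate k 2
    refine fullCycleType_involution rfl σ₂ ?_ ?_
    · refine Equiv.ext fun x => ?_
      show σ₂ (σ₂ x) = x
      simp [σ₂, Equiv.permCongr_apply]
    · intro x h
      have h' : e0 (s2 k (e0.symm x)) = e0 (e0.symm x) := by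
        rw [e0.apply_symm_apply]
        exact h
      have h2 := congrArg Prod.snd (e0.injective h')
      simp only [s2_apply] at h2
      exact Bool.not_ne_self _ h2
  · -- fullCycleType (σ₁ * σ₂) = replicate k 2
    show fullCycleType (σ₁ * σ₂) = Multiset.replicate k 2
    have hmul' : σ₁ * σ₂ = e0.permCongr (s1 k * s2 k) := permCongr_mul e0 (s1 k) (s2 k)
    refine fullCycleType_involution rfl _ ?_ ?_
    · refine Equiv.ext fun x => ?_
      show (σ₁ * σ₂) ((σ₁ * σ₂) x) = x
      rw [hmul']
      simp only [Equiv.permCongr_apply, Equiv.symm_apply_apply]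
      rw [s12_invol, Equiv.apply_symm_apply]
    · intro x h
      rw [hmul'] at h
      have h' : e0 ((s1 k * s2 k) (e0.symm x)) = e0 (e0.symm x) := by
        rw [e0.apply_symm_apply]
        exact h
      have h2 := congrArg Prod.snd (e0.injective h')
      simp only [Equiv.Perm.mul_apply, s1_apply, s2_apply] at h2
      exact Bool.not_ne_self _ h2
  · -- transitivity
    have hstep : ∀ z : ZMod k × Bool, σ₁ (e0 z) = e0 (z.1 + 1, z.2) := by
      intro z
      simp [σ₁, Equiv.permCongr_apply]
    have hs1n : ∀ (n : ℕ) (z : ZMod k × Bool), (σ₁ ^ n) (e0 z) = e0 (z.1 + n, z.2) := by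
      intro n
      induction n with
      | zero => intro z; simp
      | succ m ih =>
        intro z
        rw [pow_succ', Equiv.Perm.mul_apply, ih, hstep]
        congr 1
        refine Prod.ext ?_ rfl
        show z.1 + (m : ZMod k) + 1 = z.1 + (((m : ℕ) + 1 : ℕ) : ZMod k)
        push_cast
        ring
    have hs2 : ∀ z : ZMod k × Bool, σ₂ (e0 z) = e0 (-z.1, !z.2) := by
      intro z
      simp [σ₂, Equiv.permCongr_apply]
    intro x y
    have hx : x = e0 (e0.symm x) := (e0.apply_symm_apply x).symm
    have hy : y = e0 (e0.symm y) := (e0.apply_symm_apply y).symm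
    set zx := e0.symm x with hzx
    set zy := e0.symm y with hzy
    have hmem1 : σ₁ ∈ Subgroup.closure ({σ₁, σ₂} : Set (Equiv.Perm (Fin (2 * k)))) :=
      Subgroup.subset_closure (Set.mem_insert _ _)
    have hmem2 : σ₂ ∈ Subgroup.closure ({σ₁, σ₂} : Set (Equiv.Perm (Fin (2 * k)))) :=
      Subgroup.subset_closure (Set.mem_insert_of_mem _ rfl)
    by_cases hb : zx.2 = zy.2
    · refine ⟨σ₁ ^ ((zy.1 - zx.1).val), pow_mem hmem1 _, ?_⟩
      rw [hx, hs1n, hy]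
      congr 1
      refine Prod.ext ?_ hb
      show zx.1 + (((zy.1 - zx.1).val : ℕ) : ZMod k) = zy.1
      rw [ZMod.natCast_val, ZMod.cast_id]
      ring
    · refine ⟨σ₁ ^ ((zy.1 + zx.1).val) * σ₂, mul_mem (pow_mem hmem1 _) hmem2, ?_⟩
      rw [Equiv.Perm.mul_apply, hx, hs2, hs1n, hy]
      congr 1
      refine Prod.ext ?_ ?_
      · show -zx.1 + (((zy.1 + zx.1).val : ℕ) : ZMod k) = zy.1
        rw [ZMod.natCast_val, ZMod.cast_id]
        ring
      · have hb2 : (!zx.2) = zy.2 := bool_flip hb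
        exact hb2

end HurwitzRow2

/-- Proposition 2.3, row 2: the number of simultaneous-conjugacy classes of transitive
triples `(σ₁, σ₂, σ₃)` in `S_{2k}` with `σ₁σ₂ = σ₃`, `σ₁` of cycle type `(k, k)` and
`σ₂, σ₃` fixed-point-free involutions equals `1`. -/
theorem hurwitz_count_row2 (k : ℕ) (hk : 0 < k) :
    Nat.card (Quot (SimConj
      (HurwitzTriples (2 * k) {k, k} (Multiset.replicate k 2) (Multiset.replicate k 2)))) = 1 := by
  haveI : NeZero k := ⟨hk.ne'⟩
  rw [Nat.card_eq_one_iff_unique]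
  constructor
  · constructor
    intro a b
    induction a using Quot.ind with
    | _ pa =>
    induction b using Quot.ind with
    | _ pb =>
    apply Quot.sound
    obtain ⟨Ep, hp1, hp2⟩ := HurwitzRow2.mem_structure hk pa.2
    obtain ⟨Eq', hq1, hq2⟩ := HurwitzRow2.mem_structure hk pb.2
    set τ : Equiv.Perm (Fin (2 * k)) := Ep.symm.trans Eq' with hτ
    have e1 : pb.1.1 = τ * pa.1.1 * τ⁻¹ := by
      refine Equiv.ext fun x => ?_
      rw [hq1, hp1]
      simp [hτ, Equiv.Perm.mul_apply, Equiv.Perm.inv_def, Equiv.permCongr_apply,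
        Equiv.trans_apply, Equiv.symm_trans_apply, Equiv.symm_apply_apply]
    have e2 : pb.1.2.1 = τ * pa.1.2.1 * τ⁻¹ := by
      refine Equiv.ext fun x => ?_
      rw [hq2, hp2]
      simp [hτ, Equiv.Perm.mul_apply, Equiv.Perm.inv_def, Equiv.permCongr_apply,
        Equiv.trans_apply, Equiv.symm_trans_apply, Equiv.symm_apply_apply]
    have e3 : pb.1.2.2 = τ * pa.1.2.2 * τ⁻¹ := by
      have hpa : pa.1.1 * pa.1.2.1 = pa.1.2.2 := pa.2.1
      have hpb : pb.1.1 * pb.1.2.1 = pb.1.2.2 := pb.2.1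
      rw [← hpa, ← hpb, e1, e2]
      group
    exact ⟨τ, e1, e2, e3⟩
  · obtain ⟨t, ht⟩ := HurwitzRow2.exists_triple k hk
    exact ⟨Quot.mk _ ⟨t, ht⟩⟩
end

section
/- Let k be a positive integer. The number of simultaneous-conjugacy classes of transitive triples (\sigma_1, \sigma_2, \sigma_3) in S_{2k} with \sigma_1 \circ \sigma_2 = \sigma_3 such that \sigma_1 is a 2k-cycle, \sigma_2 is a fixed-point-free involution with cycle type (2, \ldots, 2) consisting of k transpositions, and \sigma_3 has cycle type (2, \ldots, 2, 1, 1) consisting of k-1 transpositions and two fixed points, equals 1. -/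
open Equiv Equiv.Perm
open Fin.CommRing

namespace Row4Aux

variable {j : ℕ}

lemma addself_iff (x a : Fin (2*j+2)) :
    x + x = a ↔ x.val + x.val = a.val ∨ x.val + x.val = a.val + (2*j+2) := by
  rw [Fin.ext_iff, Fin.add_def]
  show (x.val + x.val) % (2*j+2) = a.val ↔ _
  have hx := x.isLt; have ha := a.isLt
  rcases Nat.lt_or_ge (x.val + x.val) (2*j+2) with h | h
  · rw [Nat.mod_eq_of_lt h]; omega
  · rw [Nat.mod_eq_sub_mod h,
      Nat.mod_eq_of_lt (show x.val + x.val - (2*j+2) < 2*j+2 by omega)]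
    omega

lemma exists_addself {a : Fin (2*j+2)} (h : a.val % 2 = 0) : ∃ x, x + x = a := by
  have ha := a.isLt
  refine ⟨⟨a.val / 2, by omega⟩, ?_⟩
  rw [addself_iff]
  left
  show a.val / 2 + a.val / 2 = a.val
  omega

lemma odd_of_no_addself {a : Fin (2*j+2)} (h : ∀ x, x + x ≠ a) : a.val % 2 = 1 := by
  by_contra h'
  obtain ⟨x, hx⟩ := exists_addself (a := a) (by omega)
  exact h x hx

lemma exists_shift {a b : Fin (2*j+2)} (ha : a.val % 2 = 1) (hb : b.val % 2 = 1) :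
    ∃ t : Fin (2*j+2), a + (t + t) = b := by
  have he : (b - a).val % 2 = 0 := by
    rw [Fin.sub_def]
    show ((2*j+2) - a.val + b.val) % (2*j+2) % 2 = 0
    have h1 := a.isLt; have h2 := b.isLt
    rcases Nat.lt_or_ge ((2*j+2) - a.val + b.val) (2*j+2) with h | h
    · rw [Nat.mod_eq_of_lt h]; omega
    · rw [Nat.mod_eq_sub_mod h,
        Nat.mod_eq_of_lt (show (2*j+2) - a.val + b.val - (2*j+2) < 2*j+2 by omega)]
      omega
  obtain ⟨t, ht⟩ := exists_addself he
  exact ⟨t, by rw [ht]; ring⟩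

lemma rot_pow (t : ℕ) (x : Fin (2*j+2)) :
    ((finRotate (2*j+2)) ^ t) x = x + (t : Fin (2*j+2)) := by
  induction t generalizing x with
  | zero => simp
  | succ t ih =>
    rw [pow_succ, Equiv.Perm.mul_apply, finRotate_succ_apply, ih]
    push_cast
    ring

lemma rot_inv_apply (y : Fin (2*j+2)) : (finRotate (2*j+2))⁻¹ y = y - 1 := by
  rw [Equiv.Perm.inv_eq_iff_eq, finRotate_succ_apply]
  ring

lemma apply_eq_of_conj {σ : Perm (Fin (2*j+2))}
    (h : σ * finRotate (2*j+2) * σ⁻¹ = (finRotate (2*j+2))⁻¹) (x : Fin (2*j+2)) :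
    σ x = σ 0 - x := by
  have key : ∀ y : Fin (2*j+2), σ (y + 1) = σ y - 1 := by
    intro y
    have h' : σ * finRotate (2*j+2) = (finRotate (2*j+2))⁻¹ * σ := by
      rw [← h]; group
    have h2 := congrArg (fun f => f y) h'
    simp only [Equiv.Perm.mul_apply, finRotate_succ_apply] at h2
    rw [h2, rot_inv_apply]
  have main : ∀ t : ℕ, σ ((t : Fin (2*j+2))) = σ 0 - (t : Fin (2*j+2)) := by
    intro t
    induction t with
    | zero => simp
    | succ t ih =>
      push_cast
      rw [key, ih]
      ring
  have := main x.val
  rwa [Fin.cast_val_eq_self] at this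

lemma sq_eq_one_of_cycleType {d : ℕ} {σ : Perm (Fin d)} {c : ℕ}
    (h : σ.cycleType = Multiset.replicate c 2) : σ * σ = 1 := by
  have h2 : σ ^ 2 = 1 := by
    rw [← orderOf_dvd_iff_pow_eq_one, ← Equiv.Perm.lcm_cycleType, h]
    refine Multiset.lcm_dvd.2 fun b hb => ?_
    rw [Multiset.eq_of_mem_replicate hb]
  simpa [sq] using h2

lemma cycleType_of_involution {d : ℕ} {σ : Perm (Fin d)} (h : σ * σ = 1) {c : ℕ}
    (hc : σ.support.card = 2 * c) : σ.cycleType = Multiset.replicate c 2 := by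
  have hall : ∀ p ∈ σ.cycleType, p = 2 := by
    intro p hp
    have h2 : 2 ≤ p := Equiv.Perm.two_le_of_mem_cycleType hp
    have hd : p ∣ orderOf σ := Equiv.Perm.dvd_of_mem_cycleType hp
    have ho : orderOf σ ∣ 2 := orderOf_dvd_of_pow_eq_one (by simpa [sq] using h)
    have := Nat.le_of_dvd (by norm_num) (hd.trans ho)
    omega
  have hrep := Multiset.eq_replicate_card.2 hall
  have hsum := Equiv.Perm.sum_cycleType σ
  rw [hrep, Multiset.sum_replicate, smul_eq_mul] at hsum
  rw [hrep]
  congr 1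
  omega

lemma fullCycleType_of_replicate {d : ℕ} {σ : Perm (Fin d)} {c : ℕ}
    (h : σ.cycleType = Multiset.replicate c 2) :
    fullCycleType σ = Multiset.replicate c 2 + Multiset.replicate (d - 2 * c) 1 := by
  rw [fullCycleType, h, Multiset.sum_replicate, smul_eq_mul, mul_comm]

lemma cycleType_of_full {d : ℕ} {σ : Perm (Fin d)} {t : Multiset ℕ}
    (h : fullCycleType σ = t) : σ.cycleType = t.filter (2 ≤ ·) := by
  subst h
  rw [fullCycleType, Multiset.filter_add,
    Multiset.filter_eq_self.2 (fun a ha => Equiv.Perm.two_le_of_mem_cycleType ha),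
    Multiset.filter_eq_nil.2 (fun a ha => by rw [Multiset.eq_of_mem_replicate ha]; omega),
    add_zero]

lemma filter_replicate_two (c : ℕ) :
    (Multiset.replicate c 2).filter (2 ≤ ·) = Multiset.replicate c 2 :=
  Multiset.filter_eq_self.2 fun a ha => by rw [Multiset.eq_of_mem_replicate ha]

lemma filter_t3 (c : ℕ) :
    (Multiset.replicate c 2 + Multiset.replicate 2 1).filter (2 ≤ ·) =
      Multiset.replicate c 2 := by
  rw [Multiset.filter_add, filter_replicate_two,
    Multiset.filter_eq_nil.2 (fun a ha => by rw [Multiset.eq_of_mem_replicate ha]; omega),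
    add_zero]

lemma filter_singleton_big {m : ℕ} (h : 2 ≤ m) :
    ({m} : Multiset ℕ).filter (2 ≤ ·) = {m} :=
  Multiset.filter_eq_self.2 fun a ha => by rw [Multiset.mem_singleton.1 ha]; exact h

lemma support_card_of_cycleType {d : ℕ} {σ : Perm (Fin d)} {c : ℕ}
    (h : σ.cycleType = Multiset.replicate c 2) : σ.support.card = 2 * c := by
  have hsum := Equiv.Perm.sum_cycleType σ
  rw [h, Multiset.sum_replicate, smul_eq_mul] at hsum
  omega

/-! ### The canonical triple -/

abbrev rot (j : ℕ) : Perm (Fin (2*j+2)) := finRotate (2*j+2)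

lemma iot_invol (j : ℕ) : Function.Involutive (fun x : Fin (2*j+2) => 1 - x) :=
  fun x => sub_sub_cancel 1 x

def iot (j : ℕ) : Perm (Fin (2*j+2)) := (iot_invol j).toPerm

lemma iot_apply (j : ℕ) (x : Fin (2*j+2)) : iot j x = 1 - x := rfl

lemma iot_sq (j : ℕ) : iot j * iot j = 1 :=
  Equiv.ext fun x => iot_invol j x

lemma iot_fpf (j : ℕ) (x : Fin (2*j+2)) : iot j x ≠ x := by
  intro h
  rw [iot_apply] at h
  have hx : x + x = 1 := by linear_combination -h
  rcases (addself_iff x 1).1 hx with h' | h' <;>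
    · rw [Fin.val_one] at h'; omega

lemma iot_support (j : ℕ) : (iot j).support = Finset.univ :=
  Finset.eq_univ_iff_forall.2 fun x => Equiv.Perm.mem_support.2 (iot_fpf j x)

lemma iot_cycleType (j : ℕ) : (iot j).cycleType = Multiset.replicate (j+1) 2 := by
  refine cycleType_of_involution (iot_sq j) ?_
  rw [iot_support, Finset.card_univ, Fintype.card_fin]
  ring

lemma sig3_apply (j : ℕ) (x : Fin (2*j+2)) : (rot j * iot j) x = (1 - x) + 1 := by
  rw [Equiv.Perm.mul_apply, iot_apply, finRotate_succ_apply]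

lemma sig3_sq (j : ℕ) : (rot j * iot j) * (rot j * iot j) = 1 := by
  refine Equiv.ext fun x => ?_
  rw [Equiv.Perm.mul_apply, sig3_apply, sig3_apply, Equiv.Perm.one_apply]
  ring

lemma sig3_fixed_iff (j : ℕ) (x : Fin (2*j+2)) :
    (rot j * iot j) x = x ↔ x + x = 1 + 1 := by
  rw [sig3_apply]
  constructor <;> intro h <;> linear_combination -h

lemma sig3_support_card (j : ℕ) : (rot j * iot j).support.card = 2 * j := by
  have hcard : (Finset.univ.filter (fun x : Fin (2*j+2) => (rot j * iot j) x = x)).card = 2 := by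
    cases j with
    | zero =>
      have hone : rot 0 * iot 0 = 1 := by
        refine Equiv.ext fun x => ?_
        rw [sig3_apply, Equiv.Perm.one_apply]
        fin_cases x <;> decide
      rw [hone]
      simp
    | succ i =>
      have hv : ((1 : Fin (2*(i+1)+2)) + 1).val = 2 := by
        rw [Fin.val_add, Fin.val_one]
        exact Nat.mod_eq_of_lt (by omega)
      obtain ⟨w, hwval⟩ : ∃ w : Fin (2*(i+1)+2), w.val = i+3 := ⟨⟨i+3, by omega⟩, rfl⟩
      have hw : w ≠ 1 := by
        intro h
        rw [Fin.ext_iff, Fin.val_one, hwval] at h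
        omega
      rw [show (Finset.univ.filter (fun x : Fin (2*(i+1)+2) => (rot (i+1) * iot (i+1)) x = x))
          = {w, 1} from ?_]
      · rw [Finset.card_insert_of_notMem (by simpa using hw), Finset.card_singleton]
      · ext x
        rw [Finset.mem_filter, sig3_fixed_iff, addself_iff, hv, Finset.mem_insert,
          Finset.mem_singleton, Fin.ext_iff, Fin.ext_iff, Fin.val_one, hwval]
        have hx := x.isLt
        constructor
        · rintro ⟨-, h | h⟩
          · right; omega
          · left; omega
        · rintro (h | h)
          · exact ⟨Finset.mem_univ x, Or.inr (by omega)⟩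
          · exact ⟨Finset.mem_univ x, Or.inl (by omega)⟩
  have := Finset.card_filter_add_card_filter_not
    (s := (Finset.univ : Finset (Fin (2*j+2))))
    (p := fun x => (rot j * iot j) x = x)
  rw [Finset.card_univ, Fintype.card_fin, hcard] at this
  have hsupp : (rot j * iot j).support
      = Finset.univ.filter (fun x => ¬ (rot j * iot j) x = x) := rfl
  rw [hsupp]
  omega

lemma sig3_cycleType (j : ℕ) : (rot j * iot j).cycleType = Multiset.replicate j 2 :=
  cycleType_of_involution (sig3_sq j) (sig3_support_card j)

lemma canonical_trans (j : ℕ) (σ : Perm (Fin (2*j+2))) : IsTransitivePair (rot j) σ := by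
  intro x y
  refine ⟨(rot j) ^ ((y - x).val), ?_, ?_⟩
  · exact Subgroup.pow_mem _ (Subgroup.subset_closure (by simp)) _
  · rw [rot_pow, Fin.cast_val_eq_self]
    ring

lemma canonical_mem (j : ℕ) :
    ((rot j, iot j, rot j * iot j) :
        Perm (Fin (2*j+2)) × Perm (Fin (2*j+2)) × Perm (Fin (2*j+2))) ∈
      HurwitzTriples (2*j+2) {2*j+2} (Multiset.replicate (j+1) 2)
        (Multiset.replicate j 2 + Multiset.replicate 2 1) := by
  refine ⟨rfl, ?_, ?_, ?_, canonical_trans j (iot j)⟩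
  · show fullCycleType (rot j) = {2*j+2}
    rw [fullCycleType, cycleType_finRotate]
    simp
  · show fullCycleType (iot j) = _
    rw [fullCycleType_of_replicate (iot_cycleType j)]
    have h0 : 2*j+2 - 2*(j+1) = 0 := by omega
    rw [h0]
    simp
  · show fullCycleType (rot j * iot j) = _
    rw [fullCycleType_of_replicate (sig3_cycleType j)]
    have h0 : 2*j+2 - 2*j = 2 := by omega
    rw [h0]

/-! ### Classification -/

lemma key {j : ℕ} {p : Perm (Fin (2*j+2)) × Perm (Fin (2*j+2)) × Perm (Fin (2*j+2))}
    (hp : p ∈ HurwitzTriples (2*j+2) {2*j+2} (Multiset.replicate (j+1) 2)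
      (Multiset.replicate j 2 + Multiset.replicate 2 1)) :
    ∃ τ, p.1 = τ * rot j * τ⁻¹ ∧ p.2.1 = τ * iot j * τ⁻¹ ∧
      p.2.2 = τ * (rot j * iot j) * τ⁻¹ := by
  obtain ⟨σ₁, σ₂, σ₃⟩ := p
  obtain ⟨hmul, h1, h2, h3, -⟩ := hp
  dsimp only at hmul h1 h2 h3 ⊢
  have hc1 : σ₁.cycleType = {2*j+2} := by
    rw [cycleType_of_full h1, filter_singleton_big (by omega)]
  have hc2 : σ₂.cycleType = Multiset.replicate (j+1) 2 := by
    rw [cycleType_of_full h2, filter_replicate_two]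
  have hc3 : σ₃.cycleType = Multiset.replicate j 2 := by
    rw [cycleType_of_full h3, filter_t3]
  have hconj : IsConj (rot j) σ₁ := by
    rw [Equiv.Perm.isConj_iff_cycleType_eq, hc1]
    exact cycleType_finRotate
  obtain ⟨τ₀, hτ₀⟩ := isConj_iff.1 hconj
  obtain ⟨ρ, hρdef⟩ : ∃ ρ, τ₀⁻¹ * σ₂ * τ₀ = ρ := ⟨_, rfl⟩
  have hσ₂ : σ₂ = τ₀ * ρ * τ₀⁻¹ := by rw [← hρdef]; group
  have hcρ : ρ.cycleType = Multiset.replicate (j+1) 2 := by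
    rw [← Equiv.Perm.cycleType_conj (σ := ρ) (τ := τ₀), ← hσ₂, hc2]
  have hρsq : ρ * ρ = 1 := sq_eq_one_of_cycleType hcρ
  have hρinv : ρ⁻¹ = ρ := inv_eq_of_mul_eq_one_right hρsq
  have hρsupp : ρ.support = Finset.univ := by
    apply Finset.eq_univ_of_card
    rw [support_card_of_cycleType hcρ, Fintype.card_fin]
    ring
  have hρfpf : ∀ x, ρ x ≠ x := fun x =>
    Equiv.Perm.mem_support.1 (hρsupp ▸ Finset.mem_univ x)
  have hcρ3 : rot j * ρ = τ₀⁻¹ * σ₃ * τ₀ := by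
    rw [← hmul, hσ₂, ← hτ₀]; group
  have hct3 : (rot j * ρ).cycleType = Multiset.replicate j 2 := by
    rw [hcρ3, show τ₀⁻¹ * σ₃ * τ₀ = τ₀⁻¹ * σ₃ * (τ₀⁻¹)⁻¹ by rw [inv_inv],
      Equiv.Perm.cycleType_conj, hc3]
  have h3sq := sq_eq_one_of_cycleType hct3
  have hneg : ρ * rot j * ρ⁻¹ = (rot j)⁻¹ := by
    rw [hρinv]
    refine eq_inv_of_mul_eq_one_right ?_
    calc rot j * (ρ * rot j * ρ) = (rot j * ρ) * (rot j * ρ) := by group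
    _ = 1 := h3sq
  have happ := apply_eq_of_conj hneg
  have haodd : (ρ 0).val % 2 = 1 := by
    apply odd_of_no_addself
    intro x hx
    exact hρfpf x (by rw [happ x, ← hx]; ring)
  have h1odd : ((1 : Fin (2*j+2))).val % 2 = 1 := by rw [Fin.val_one]
  obtain ⟨t, ht⟩ := exists_shift h1odd haodd
  have hρeq : ρ = (rot j) ^ t.val * iot j * ((rot j) ^ t.val)⁻¹ := by
    refine Equiv.ext fun x => ?_
    have hx : ((rot j) ^ t.val)⁻¹ x = x - t := by
      rw [Equiv.Perm.inv_eq_iff_eq, rot_pow, Fin.cast_val_eq_self]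
      ring
    rw [happ, Equiv.Perm.mul_apply, Equiv.Perm.mul_apply, hx, iot_apply, rot_pow,
      Fin.cast_val_eq_self, ← ht]
    ring
  refine ⟨τ₀ * (rot j) ^ t.val, ?_, ?_, ?_⟩
  · rw [← hτ₀]; group
  · rw [hσ₂, hρeq]; group
  · rw [← hmul, hσ₂, hρeq, ← hτ₀]; group

end Row4Aux

/-- Proposition 2.3, row 4: the number of simultaneous-conjugacy classes of transitive
triples `(σ₁, σ₂, σ₃)` in `S_{2k}` with `σ₁σ₂ = σ₃`, `σ₁` a `2k`-cycle, `σ₂` a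
fixed-point-free involution and `σ₃` of cycle type `(2, …, 2, 1, 1)` equals `1`. -/
theorem hurwitz_count_row4 (k : ℕ) (hk : 0 < k) :
    Nat.card (Quot (SimConj
      (HurwitzTriples (2 * k) {2 * k} (Multiset.replicate k 2)
        (Multiset.replicate (k - 1) 2 + Multiset.replicate 2 1)))) = 1 := by
  obtain ⟨j, rfl⟩ : ∃ j, k = j + 1 := ⟨k - 1, by omega⟩
  rw [Nat.card_eq_one_iff_unique]
  constructor
  · constructor
    intro a b
    induction a using Quot.ind with | _ p => ?_
    induction b using Quot.ind with | _ q => ?_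
    obtain ⟨τp, hp1, hp2, hp3⟩ := Row4Aux.key p.2
    obtain ⟨τq, hq1, hq2, hq3⟩ := Row4Aux.key q.2
    have hmemc := Row4Aux.canonical_mem j
    have hP := Quot.sound (r := SimConj (HurwitzTriples (2 * (j+1)) {2 * (j+1)}
        (Multiset.replicate (j+1) 2)
        (Multiset.replicate ((j+1) - 1) 2 + Multiset.replicate 2 1)))
      (a := ⟨(Row4Aux.rot j, Row4Aux.iot j, Row4Aux.rot j * Row4Aux.iot j), hmemc⟩)
      (b := p) ⟨τp, hp1, hp2, hp3⟩
    have hQ := Quot.sound (r := SimConj (HurwitzTriples (2 * (j+1)) {2 * (j+1)}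
        (Multiset.replicate (j+1) 2)
        (Multiset.replicate ((j+1) - 1) 2 + Multiset.replicate 2 1)))
      (a := ⟨(Row4Aux.rot j, Row4Aux.iot j, Row4Aux.rot j * Row4Aux.iot j), hmemc⟩)
      (b := q) ⟨τq, hq1, hq2, hq3⟩
    rw [← hP, ← hQ]
  · exact ⟨Quot.mk _ ⟨(Row4Aux.rot j, Row4Aux.iot j, Row4Aux.rot j * Row4Aux.iot j),
      Row4Aux.canonical_mem j⟩⟩
end

section
/- Let m, n be positive integers with |m - n| \neq 1 and m + n + 1 = 2k even. Then there is no transitive triple (\sigma_1, \sigma_2, \sigma_3) in S_{2k} with \sigma_1 \circ \sigma_2 = \sigma_3 such that \sigma_1 has cycle type (m, n, 1), \sigma_2 has cycle type (4, 2, \ldots, 2) consisting of one 4-cycle and k-2 transpositions, and \sigma_3 is a fixed-point-free involution with cycle type (2, \ldots, 2) consisting of k transpositions. In particular the number of such triples up to simultaneous conjugation is 0. -/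
section Helpers
open Equiv Equiv.Perm Finset
variable {α : Type*} [Fintype α] [DecidableEq α]
set_option linter.unusedSectionVars false
set_option maxHeartbeats 1000000

def orb (σ : Perm α) (x : α) : Finset α := Finset.univ.filter (σ.SameCycle x ·)

@[simp] lemma mem_orb {σ : Perm α} {x y : α} : y ∈ orb σ x ↔ σ.SameCycle x y := by
  simp [orb]

lemma orb_eq_of_sameCycle {σ : Perm α} {x y : α} (h : σ.SameCycle x y) :
    orb σ x = orb σ y := by
  ext z; simp only [mem_orb]
  exact ⟨fun hz => h.symm.trans hz, fun hz => h.trans hz⟩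

lemma zpow_fix {σ : Perm α} {y : α} (h : σ y = y) : ∀ i : ℤ, (σ ^ i) y = y := by
  intro i
  induction i using Int.induction_on with
  | zero => simp
  | succ n ih => rw [add_comm, zpow_add, zpow_one, Perm.mul_apply, ih, h]
  | pred n ih =>
      rw [sub_eq_add_neg, add_comm, zpow_add, Perm.mul_apply, ih, zpow_neg, zpow_one]
      conv_lhs => rw [← h]
      simp

lemma eq_of_sameCycle_fixed {σ : Perm α} {x y : α} (hy : σ y = y) (h : σ.SameCycle x y) :
    x = y := by
  obtain ⟨i, hi⟩ := h.symm
  rw [← hi, zpow_fix hy]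

/-- a σ-forward-invariant finset is backward invariant -/
lemma inv_mem_of_forward {σ : Perm α} {U : Finset α} (hU : ∀ z ∈ U, σ z ∈ U) :
    ∀ z ∈ U, σ⁻¹ z ∈ U := by
  have himg : U.image σ = U := by
    apply Finset.eq_of_subset_of_card_le
    · intro z hz; obtain ⟨w, hw, rfl⟩ := Finset.mem_image.1 hz; exact hU w hw
    · rw [Finset.card_image_of_injective _ σ.injective]
  intro z hz
  have : z ∈ U.image σ := himg.symm ▸ hz
  obtain ⟨w, hw, hwz⟩ := Finset.mem_image.1 this
  have : σ⁻¹ z = w := by rw [← hwz]; simp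
  rwa [this]

lemma sameCycle_mem_of_invariant {σ : Perm α} {U : Finset α} (hU : ∀ z ∈ U, σ z ∈ U)
    {b y : α} (hb : b ∈ U) (h : σ.SameCycle b y) : y ∈ U := by
  obtain ⟨i, hi⟩ := h
  subst hi
  induction i using Int.induction_on with
  | zero => simpa using hb
  | succ n ih => rw [add_comm, zpow_add, zpow_one, Perm.mul_apply]; exact hU _ ih
  | pred n ih =>
      rw [sub_eq_add_neg, add_comm, zpow_add, Perm.mul_apply, zpow_neg, zpow_one]
      exact inv_mem_of_forward hU _ ih

/-- refinement: if every ρ-step stays in σ-orbits, then ρ-orbits refine σ-orbits -/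
lemma sameCycle_refine {σ ρ : Perm α} (h : ∀ z, σ.SameCycle z (ρ z)) {x y : α}
    (hxy : ρ.SameCycle x y) : σ.SameCycle x y := by
  have : y ∈ orb σ x := by
    refine sameCycle_mem_of_invariant (σ := ρ) ?_ (by simp [Equiv.Perm.SameCycle.refl]) hxy
    intro z hz
    rw [mem_orb] at hz ⊢
    exact hz.trans (h z)
  simpa using this

lemma inv_self {ι : Perm α} (h : ι * ι = 1) : ι⁻¹ = ι := by
  rw [inv_eq_iff_mul_eq_one]; exact h

lemma conj_zpow_of_inv {P ι : Perm α} (hc : ι * P * ι = P⁻¹) (hι : ι * ι = 1) :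
    ∀ i : ℤ, ι * P ^ i = P ^ (-i) * ι := by
  intro i
  have key : (MulAut.conj ι) (P ^ i) = (P⁻¹) ^ i := by
    rw [map_zpow]
    congr 1
    simp [MulAut.conj_apply, inv_self hι, hc]
  simp only [MulAut.conj_apply, inv_self hι] at key
  have : ι * P ^ i * ι * ι = (P⁻¹) ^ i * ι := by rw [key]
  rwa [mul_assoc (ι * P ^ i), hι, mul_one, inv_zpow, ← zpow_neg] at this

lemma conj_zpow_apply {P ι : Perm α} (hc : ι * P * ι = P⁻¹) (hι : ι * ι = 1)
    (i : ℤ) (z : α) : ι ((P ^ i) z) = (P ^ (-i)) (ι z) := by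
  have := DFunLike.congr_fun (conj_zpow_of_inv hc hι i) z
  simpa using this

lemma sameCycle_conj_iff {P ι : Perm α} (hc : ι * P * ι = P⁻¹) (hι : ι * ι = 1)
    {x y : α} : P.SameCycle (ι x) (ι y) ↔ P.SameCycle x y := by
  have hid : ∀ u, ι (ι u) = u := fun u => by
    have := DFunLike.congr_fun hι u; simpa using this
  have key : ∀ u v : α, P.SameCycle u v → P.SameCycle (ι u) (ι v) := by
    rintro u v ⟨i, rfl⟩
    exact ⟨-i, by rw [← conj_zpow_apply hc hι]⟩
  constructor
  · intro h
    have := key _ _ h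
    simpa [hid] using this
  · exact key x y

lemma pairing_core {ι₁ ι₂ : Perm α} (h1 : ι₁ * ι₁ = 1) (h2 : ι₂ * ι₂ = 1)
    (f1 : ∀ x, ι₁ x ≠ x) (f2 : ∀ x, ι₂ x ≠ x) (x : α) :
    ¬ (ι₁ * ι₂).SameCycle x (ι₁ x) := by
  set P := ι₁ * ι₂ with hP
  have hc1 : ι₁ * P * ι₁ = P⁻¹ := by
    rw [hP, mul_inv_rev, inv_self h1, inv_self h2]
    calc ι₁ * (ι₁ * ι₂) * ι₁ = (ι₁ * ι₁) * (ι₂ * ι₁) := by group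
      _ = ι₂ * ι₁ := by rw [h1, one_mul]
  have hc2 : ι₂ * P * ι₂ = P⁻¹ := by
    rw [hP, mul_inv_rev, inv_self h1, inv_self h2]
    calc ι₂ * (ι₁ * ι₂) * ι₂ = ι₂ * ι₁ * (ι₂ * ι₂) := by group
      _ = ι₂ * ι₁ := by rw [h2, mul_one]
  rintro ⟨j, hj⟩
  rcases Int.even_or_odd j with ⟨i, hi⟩ | ⟨i, hi⟩
  · apply f1 ((P ^ i) x)
    rw [conj_zpow_apply hc1 h1, ← hj, ← Perm.mul_apply, ← zpow_add]
    congr 2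
    omega
  · apply f2 ((P ^ i) x)
    have hι₂x : ι₂ x = (P ^ (j - 1)) x := by
      have : ι₂ = ι₁ * P := by rw [hP, ← mul_assoc, h1, one_mul]
      rw [this, Perm.mul_apply]
      have : P x = (P ^ (1 : ℤ)) x := by simp
      rw [this, conj_zpow_apply hc1 h1, ← hj, ← Perm.mul_apply, ← zpow_add]
      congr 2
      ring
    rw [conj_zpow_apply hc2 h2, hι₂x, ← Perm.mul_apply, ← zpow_add]
    congr 2
    omega


lemma dichotomy {P : Perm α} {a b : α} (h : ¬ P.SameCycle a b) :
    (P * Equiv.swap a b).SameCycle a b := by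
  have hab : a ≠ b := fun hh => h (hh ▸ Equiv.Perm.SameCycle.refl _ _)
  set ρ := P * Equiv.swap a b with hρ
  have hρa : ρ a = P b := by simp [hρ, Equiv.swap_apply_left]
  have hex : ∃ ℓ, 0 < ℓ ∧ (P ^ ℓ) b = b :=
    ⟨orderOf P, orderOf_pos P, by simp [pow_orderOf_eq_one]⟩
  obtain ⟨ℓ, hℓpos, hℓfix, hmin⟩ : ∃ ℓ, 0 < ℓ ∧ (P ^ ℓ) b = b ∧
      ∀ j < ℓ, ¬(0 < j ∧ (P ^ j) b = b) :=
    ⟨Nat.find hex, (Nat.find_spec hex).1, (Nat.find_spec hex).2,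
      fun j hj => Nat.find_min hex hj⟩
  have claim : ∀ i, i < ℓ → (ρ ^ (i + 1)) a = (P ^ (i + 1)) b := by
    intro i
    induction i with
    | zero => intro _; simpa using hρa
    | succ i ih =>
      intro hi
      have hi' : i < ℓ := Nat.lt_of_succ_lt hi
      have hz := ih hi'
      set z := (P ^ (i + 1)) b with hzdef
      have hzb : z ≠ b := by
        intro hzb
        exact hmin (i+1) hi ⟨Nat.succ_pos i, hzb⟩
      have hza : z ≠ a := by
        intro hza
        exact h (Equiv.Perm.SameCycle.symm ⟨((i+1 : ℕ) : ℤ), by rw [zpow_natCast]; exact hza⟩)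
      have : ρ z = P z := by
        simp [hρ, Equiv.swap_apply_of_ne_of_ne hza hzb]
      calc (ρ ^ (i + 1 + 1)) a = ρ ((ρ ^ (i + 1)) a) := by
            rw [pow_succ', Perm.mul_apply]
        _ = P z := by rw [hz, this]
        _ = (P ^ (i + 1 + 1)) b := by rw [pow_succ', Perm.mul_apply, hzdef]
  have hfin : (ρ ^ ℓ) a = b := by
    obtain ⟨i, hie⟩ : ∃ i, ℓ = i + 1 := ⟨ℓ - 1, by omega⟩
    rw [hie, claim i (by omega), ← hie]
    exact hℓfix
  exact ⟨(ℓ : ℤ), by rw [zpow_natCast]; exact hfin⟩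

lemma orb_image_of_conj {P ι : Perm α} (hc : ∀ x y : α, P.SameCycle (ι x) (ι y) ↔ P.SameCycle x y)
    (hid : ∀ u, ι (ι u) = u) (x : α) : orb P (ι x) = (orb P x).image ι := by
  ext y
  simp only [mem_orb, Finset.mem_image]
  constructor
  · intro hy
    exact ⟨ι y, by rw [← hc]; rwa [hid], hid y⟩
  · rintro ⟨w, hw, rfl⟩
    rw [hc]
    exact hw
lemma orb_card_of_conj {P ι : Perm α} (hc : ∀ x y : α, P.SameCycle (ι x) (ι y) ↔ P.SameCycle x y)
    (hid : ∀ u, ι (ι u) = u) (x : α) : (orb P (ι x)).card = (orb P x).card := by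
  rw [orb_image_of_conj hc hid, Finset.card_image_of_injective _ ι.injective]

lemma orb_eq_support_cycleOf {σ : Perm α} {x : α} (hx : σ x ≠ x) :
    orb σ x = (σ.cycleOf x).support := by
  ext y
  rw [mem_orb, Equiv.Perm.mem_support_cycleOf_iff]
  simp [Equiv.Perm.mem_support, hx]

lemma pow_orb_card_eq {σ : Perm α} {x : α} (hx : σ x ≠ x) :
    (σ ^ (orb σ x).card) x = x ∧ ∀ i, 0 < i → i < (orb σ x).card → (σ ^ i) x ≠ x := by
  have hc : (σ.cycleOf x).IsCycle := Equiv.Perm.isCycle_cycleOf σ hx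
  have hord : orderOf (σ.cycleOf x) = (σ.cycleOf x).support.card := hc.orderOf
  have hmemsupp : x ∈ (σ.cycleOf x).support := by
    rw [Equiv.Perm.mem_support, Equiv.Perm.cycleOf_apply_self]; exact hx
  have hcard : (orb σ x).card = (σ.cycleOf x).support.card := by
    rw [orb_eq_support_cycleOf hx]
  constructor
  · rw [← Equiv.Perm.cycleOf_pow_apply_self, hcard, ← hord, pow_orderOf_eq_one]; simp
  · intro i hi hi' hfix
    rw [← Equiv.Perm.cycleOf_pow_apply_self] at hfix
    have : (σ.cycleOf x) ^ i = 1 := (hc.pow_eq_one_iff'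
      (x := x) (by rwa [Equiv.Perm.cycleOf_apply_self])).2 hfix
    have := orderOf_dvd_of_pow_eq_one this
    rw [hord, ← hcard] at this
    have := Nat.le_of_dvd hi this
    omega


lemma exists_rep {σ : Perm α} {s : ℕ} (hs : s ∈ σ.cycleType) :
    ∃ x, σ x ≠ x ∧ (orb σ x).card = s := by
  rw [Equiv.Perm.cycleType_def, Multiset.mem_map] at hs
  obtain ⟨c, hc, hcard⟩ := hs
  rw [← Finset.mem_def] at hc
  have hcyc := (Equiv.Perm.mem_cycleFactorsFinset_iff.1 hc).1
  obtain ⟨x, hx⟩ := hcyc.nonempty_support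
  have hσx : σ x ≠ x := by
    have := (Equiv.Perm.mem_cycleFactorsFinset_iff.1 hc).2 x hx
    rw [← this]
    exact Equiv.Perm.mem_support.1 hx
  have hco : c = σ.cycleOf x := Equiv.Perm.cycle_is_cycleOf hx hc
  exact ⟨x, hσx, by rw [orb_eq_support_cycleOf hσx, ← hco]; exact hcard⟩

lemma orb_card_mem_cycleType {σ : Perm α} {x : α} (hx : σ x ≠ x) :
    (orb σ x).card ∈ σ.cycleType := by
  rw [Equiv.Perm.cycleType_def, Multiset.mem_map]
  refine ⟨σ.cycleOf x, ?_, by rw [orb_eq_support_cycleOf hx]; rfl⟩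
  rw [← Finset.mem_def]
  exact Equiv.Perm.cycleOf_mem_cycleFactorsFinset_iff.2 (Equiv.Perm.mem_support.2 hx)

lemma count_two_le {σ : Perm α} {x y : α} {s : ℕ} (hx : σ x ≠ x) (hy : σ y ≠ y)
    (hne : σ.cycleOf x ≠ σ.cycleOf y) (h1 : (orb σ x).card = s) (h2 : (orb σ y).card = s) :
    2 ≤ σ.cycleType.count s := by
  have hmx : σ.cycleOf x ∈ σ.cycleFactorsFinset :=
    Equiv.Perm.cycleOf_mem_cycleFactorsFinset_iff.2 (Equiv.Perm.mem_support.2 hx)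
  have hmy : σ.cycleOf y ∈ σ.cycleFactorsFinset :=
    Equiv.Perm.cycleOf_mem_cycleFactorsFinset_iff.2 (Equiv.Perm.mem_support.2 hy)
  have hsub : ({σ.cycleOf x, σ.cycleOf y} : Finset (Perm α)) ⊆ σ.cycleFactorsFinset := by
    intro c hc
    rcases Finset.mem_insert.1 hc with rfl | hc
    · exact hmx
    · rw [Finset.mem_singleton.1 hc]; exact hmy
  have hle : ({σ.cycleOf x, σ.cycleOf y} : Finset (Perm α)).val ≤ σ.cycleFactorsFinset.val :=
    Finset.val_le_iff.2 hsub
  have e1 : (σ.cycleOf x).support.card = s := by rw [← orb_eq_support_cycleOf hx, h1]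
  have e2 : (σ.cycleOf y).support.card = s := by rw [← orb_eq_support_cycleOf hy, h2]
  rw [Equiv.Perm.cycleType_def]
  have this' := Multiset.count_le_of_le s
    (Multiset.map_le_map (f := (Finset.card ∘ Equiv.Perm.support)) hle)
  refine le_trans ?_ this'
  rw [Finset.insert_val, Multiset.ndinsert_of_notMem (by simpa using hne), Finset.singleton_val]
  simp [Function.comp, e1, e2]

lemma sameCycle_of_cycleOf_eq {σ : Perm α} {x y : α} (hy : σ y ≠ y)
    (h : σ.cycleOf x = σ.cycleOf y) : σ.SameCycle x y := by
  have : y ∈ (σ.cycleOf y).support := by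
    rw [Equiv.Perm.mem_support, Equiv.Perm.cycleOf_apply_self]; exact hy
  rw [← h, Equiv.Perm.mem_support_cycleOf_iff] at this
  exact this.1

lemma orb_card_pos {σ : Perm α} (x : α) : 0 < (orb σ x).card :=
  Finset.card_pos.2 ⟨x, by simp [Equiv.Perm.SameCycle.refl]⟩

lemma orb_disjoint {σ : Perm α} {x y : α} (h : ¬ σ.SameCycle x y) :
    Disjoint (orb σ x) (orb σ y) := by
  rw [Finset.disjoint_left]
  intro z hz hz'
  rw [mem_orb] at hz hz'
  exact h (hz.trans hz'.symm)

lemma caseI_core {σ₁ P σ₃ : Perm α} {p₀ p₂ : α} {μ ν : ℕ} {a b c : α}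
    (hσ₁ : σ₁ = P * Equiv.swap p₀ p₂)
    (hPsame : P.SameCycle p₀ p₂)
    (pi1 : ∀ x, ¬ P.SameCycle x (σ₃ x))
    (conj3 : ∀ x y : α, P.SameCycle (σ₃ x) (σ₃ y) ↔ P.SameCycle x y)
    (id3 : ∀ u, σ₃ (σ₃ u) = u)
    (hnab : ¬ σ₁.SameCycle a b) (hnac : ¬ σ₁.SameCycle a c) (hnbc : ¬ σ₁.SameCycle b c)
    (hca : (orb σ₁ a).card = μ) (hcb : (orb σ₁ b).card = ν) (hcc : (orb σ₁ c).card = 1)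
    (hcover : ∀ x, σ₁.SameCycle a x ∨ σ₁.SameCycle b x ∨ σ₁.SameCycle c x)
    (hμν : μ ≠ ν) (hμν1 : μ ≠ ν + 1) (hνμ1 : ν ≠ μ + 1) : False := by
  have hμpos : 0 < μ := hca ▸ orb_card_pos a
  have hνpos : 0 < ν := hcb ▸ orb_card_pos b
  have hrefine : ∀ x y : α, σ₁.SameCycle x y → P.SameCycle x y := by
    intro x y
    apply sameCycle_refine
    intro z
    rcases eq_or_ne z p₀ with rfl | hz0
    · rw [hσ₁]; simp only [Perm.mul_apply, Equiv.swap_apply_left]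
      exact hPsame.trans ⟨1, by simp⟩
    rcases eq_or_ne z p₂ with rfl | hz2
    · rw [hσ₁]; simp only [Perm.mul_apply, Equiv.swap_apply_right]
      exact hPsame.symm.trans ⟨1, by simp⟩
    · rw [hσ₁]; simp only [Perm.mul_apply, Equiv.swap_apply_of_ne_of_ne hz0 hz2]
      exact ⟨1, by simp⟩
  have hcard3 : ∀ x : α, (orb P (σ₃ x)).card = (orb P x).card := fun x =>
    orb_card_of_conj (fun u v => conj3 u v) id3 x
  -- merged orbit description
  have key : ∀ x y z : α,
      (∀ w, σ₁.SameCycle x w ∨ σ₁.SameCycle y w ∨ σ₁.SameCycle z w) →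
      P.SameCycle x y → ¬ P.SameCycle x z → orb P x = orb σ₁ x ∪ orb σ₁ y := by
    intro x y z hcov hxy hxz
    ext w
    simp only [mem_orb, Finset.mem_union]
    constructor
    · intro h
      rcases hcov w with h' | h' | h'
      · exact Or.inl h'
      · exact Or.inr h'
      · exact absurd (h.trans (hrefine _ _ h').symm) hxz
    · rintro (h' | h')
      · exact hrefine _ _ h'
      · exact hxy.trans (hrefine _ _ h')
  -- untouched orbit description
  have key2 : ∀ x y z : α,
      (∀ w, σ₁.SameCycle x w ∨ σ₁.SameCycle y w ∨ σ₁.SameCycle z w) →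
      ¬ P.SameCycle x y → ¬ P.SameCycle x z → orb P x = orb σ₁ x := by
    intro x y z hcov hxy hxz
    ext w
    simp only [mem_orb]
    constructor
    · intro h
      rcases hcov w with h' | h' | h'
      · exact h'
      · exact absurd (h.trans (hrefine _ _ h').symm) hxy
      · exact absurd (h.trans (hrefine _ _ h').symm) hxz
    · exact fun h => hrefine _ _ h
  have cov_a : ∀ w, σ₁.SameCycle a w ∨ σ₁.SameCycle b w ∨ σ₁.SameCycle c w := hcover
  have cov_b : ∀ w, σ₁.SameCycle b w ∨ σ₁.SameCycle a w ∨ σ₁.SameCycle c w := by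
    intro w; rcases hcover w with h|h|h <;> tauto
  have cov_c : ∀ w, σ₁.SameCycle c w ∨ σ₁.SameCycle a w ∨ σ₁.SameCycle b w := by
    intro w; rcases hcover w with h|h|h <;> tauto
  have cov_a' : ∀ w, σ₁.SameCycle a w ∨ σ₁.SameCycle c w ∨ σ₁.SameCycle b w := by
    intro w; rcases hcover w with h|h|h <;> tauto
  have cov_b' : ∀ w, σ₁.SameCycle b w ∨ σ₁.SameCycle c w ∨ σ₁.SameCycle a w := by
    intro w; rcases hcover w with h|h|h <;> tauto
  by_cases eab : P.SameCycle a b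
  · by_cases eac : P.SameCycle a c
    · -- everything in one P-orbit
      have hall : ∀ x, P.SameCycle a x := by
        intro x
        rcases hcover x with h | h | h
        · exact hrefine _ _ h
        · exact eab.trans (hrefine _ _ h)
        · exact eac.trans (hrefine _ _ h)
      exact pi1 a (hall (σ₃ a))
    · have ebc : ¬ P.SameCycle b c := fun h => eac (eab.trans h)
      -- orbits : A ∪ B and C
      have horba : orb P a = orb σ₁ a ∪ orb σ₁ b := key a b c cov_a eab eac
      have horbc : orb P c = orb σ₁ c :=
        key2 c a b cov_c (fun h => eac h.symm) (fun h => ebc h.symm)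
      have hcab : (orb P a).card = μ + ν := by
        rw [horba, Finset.card_union_of_disjoint (orb_disjoint hnab), hca, hcb]
      have hy := pi1 c
      rcases hcover (σ₃ c) with h | h | h
      · have h1 : (orb P (σ₃ c)).card = 1 := by rw [hcard3 c, horbc, hcc]
        have h2 : orb P (σ₃ c) = orb P a := orb_eq_of_sameCycle (hrefine _ _ h).symm
        rw [h2, hcab] at h1; omega
      · have h1 : (orb P (σ₃ c)).card = 1 := by rw [hcard3 c, horbc, hcc]
        have h2 : orb P (σ₃ c) = orb P a := by
          apply orb_eq_of_sameCycle
          exact (eab.trans (hrefine _ _ h)).symm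
        rw [h2, hcab] at h1; omega
      · exact hy (hrefine _ _ h)
  · by_cases eac : P.SameCycle a c
    · have ebc : ¬ P.SameCycle b c := fun h => eab (eac.trans h.symm)
      -- orbits : A ∪ C and B
      have horba : orb P a = orb σ₁ a ∪ orb σ₁ c := key a c b cov_a' eac eab
      have horbb : orb P b = orb σ₁ b :=
        key2 b a c cov_b (fun h => eab h.symm) ebc
      have hcac : (orb P a).card = μ + 1 := by
        rw [horba, Finset.card_union_of_disjoint (orb_disjoint hnac), hca, hcc]
      rcases hcover (σ₃ b) with h | h | h
      · have h1 : (orb P (σ₃ b)).card = ν := by rw [hcard3 b, horbb, hcb]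
        have h2 : orb P (σ₃ b) = orb P a := orb_eq_of_sameCycle (hrefine _ _ h).symm
        rw [h2, hcac] at h1; exact hνμ1 h1.symm
      · exact pi1 b (hrefine _ _ h)
      · have h1 : (orb P (σ₃ b)).card = ν := by rw [hcard3 b, horbb, hcb]
        have h2 : orb P (σ₃ b) = orb P a := by
          apply orb_eq_of_sameCycle
          exact (eac.trans (hrefine _ _ h)).symm
        rw [h2, hcac] at h1; exact hνμ1 h1.symm
    · by_cases ebc : P.SameCycle b c
      · -- orbits : A and B ∪ C
        have horbb : orb P b = orb σ₁ b ∪ orb σ₁ c := key b c a cov_b' ebc (fun h => eab h.symm)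
        have horba : orb P a = orb σ₁ a := key2 a b c cov_a eab eac
        have hcbc : (orb P b).card = ν + 1 := by
          rw [horbb, Finset.card_union_of_disjoint (orb_disjoint hnbc), hcb, hcc]
        rcases hcover (σ₃ a) with h | h | h
        · exact pi1 a (hrefine _ _ h)
        · have h1 : (orb P (σ₃ a)).card = μ := by rw [hcard3 a, horba, hca]
          have h2 : orb P (σ₃ a) = orb P b := orb_eq_of_sameCycle (hrefine _ _ h).symm
          rw [h2, hcbc] at h1; exact hμν1 h1.symm
        · have h1 : (orb P (σ₃ a)).card = μ := by rw [hcard3 a, horba, hca]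
          have h2 : orb P (σ₃ a) = orb P b := by
            apply orb_eq_of_sameCycle
            exact (ebc.trans (hrefine _ _ h)).symm
          rw [h2, hcbc] at h1; exact hμν1 h1.symm
      · -- orbits : A, B, C separately
        have horba : orb P a = orb σ₁ a := key2 a b c cov_a eab eac
        have horbb : orb P b = orb σ₁ b :=
          key2 b a c cov_b (fun h => eab h.symm) ebc
        have horbc : orb P c = orb σ₁ c :=
          key2 c a b cov_c (fun h => eac h.symm) (fun h => ebc h.symm)
        have hμ1 : μ = 1 := by
          rcases hcover (σ₃ a) with h | h | h
          · exact absurd (hrefine _ _ h) (pi1 a)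
          · have h1 : (orb P (σ₃ a)).card = μ := by rw [hcard3 a, horba, hca]
            have h2 : orb P (σ₃ a) = orb P b := orb_eq_of_sameCycle (hrefine _ _ h).symm
            rw [h2, horbb, hcb] at h1; omega
          · have h1 : (orb P (σ₃ a)).card = μ := by rw [hcard3 a, horba, hca]
            have h2 : orb P (σ₃ a) = orb P c := orb_eq_of_sameCycle (hrefine _ _ h).symm
            rw [h2, horbc, hcc] at h1; exact h1.symm
        have hν1 : ν = 1 := by
          rcases hcover (σ₃ b) with h | h | h
          · have h1 : (orb P (σ₃ b)).card = ν := by rw [hcard3 b, horbb, hcb]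
            have h2 : orb P (σ₃ b) = orb P a := orb_eq_of_sameCycle (hrefine _ _ h).symm
            rw [h2, horba, hca] at h1; omega
          · exact absurd (hrefine _ _ h) (pi1 b)
          · have h1 : (orb P (σ₃ b)).card = ν := by rw [hcard3 b, horbb, hcb]
            have h2 : orb P (σ₃ b) = orb P c := orb_eq_of_sameCycle (hrefine _ _ h).symm
            rw [h2, horbc, hcc] at h1; exact h1.symm
        exact hμν (hμ1.trans hν1.symm)

lemma perm_sq_apply {σ : Perm α} (h : σ * σ = 1) (u : α) : σ (σ u) = u := by
  have := DFunLike.congr_fun h u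
  simpa using this

lemma orb_of_fixed {σ : Perm α} {x : α} (h : σ x = x) : orb σ x = {x} := by
  ext y
  simp only [mem_orb, Finset.mem_singleton]
  constructor
  · intro hy; exact eq_of_sameCycle_fixed h hy.symm
  · rintro rfl; exact Equiv.Perm.SameCycle.refl _ _

lemma inv_apply_of_apply {σ : Perm α} {x y : α} (h : σ x = y) : σ⁻¹ y = x := by
  rw [← h]; simp

lemma orb_eq_singleton_of_card_one {σ : Perm α} {x : α} (h : (orb σ x).card = 1) :
    orb σ x = {x} := by
  obtain ⟨d, hd⟩ := Finset.card_eq_one.1 h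
  have hx : x ∈ orb σ x := by simp [Equiv.Perm.SameCycle.refl]
  rw [hd] at hx ⊢
  rw [Finset.mem_singleton] at hx
  rw [hx]

lemma caseII_core {σ₁ σ₂ σ₃ M P : Perm α} {p₀ p₁ p₂ p₃ : α} {μ ν : ℕ} {a b c : α}
    (hP : P = σ₃ * M)
    (hσ₁ : σ₁ = P * Equiv.swap p₀ p₂)
    (hσ₂ : σ₂ = M * Equiv.swap p₁ p₃)
    (hM2 : M * M = 1) (hMf : ∀ x, M x ≠ x)
    (h32 : σ₃ * σ₃ = 1) (h3f : ∀ x, σ₃ x ≠ x)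
    (hp1 : p₁ = M p₀) (hp3 : p₃ = M p₂)
    (hp02 : p₀ ≠ p₂)
    (hPdiff : ¬ P.SameCycle p₀ p₂)
    (h02cyc : σ₁.SameCycle p₀ p₂)
    (hnab : ¬ σ₁.SameCycle a b) (hnac : ¬ σ₁.SameCycle a c) (hnbc : ¬ σ₁.SameCycle b c)
    (hca : (orb σ₁ a).card = μ) (hcb : (orb σ₁ b).card = ν) (hcc : (orb σ₁ c).card = 1)
    (hcover : ∀ x, σ₁.SameCycle a x ∨ σ₁.SameCycle b x ∨ σ₁.SameCycle c x)
    (hμν1 : μ ≠ ν + 1) (hνμ1 : ν ≠ μ + 1)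
    (hp0a : σ₁.SameCycle a p₀)
    (htrans : ∀ x y : α, ∃ τ ∈ Subgroup.closure ({σ₁, σ₂} : Set (Perm α)), τ x = y) :
    False := by
  have hid3 : ∀ u, σ₃ (σ₃ u) = u := perm_sq_apply h32
  have hidM : ∀ u, M (M u) = u := perm_sq_apply hM2
  have hc3 : σ₃ * P * σ₃ = P⁻¹ := by
    rw [hP, mul_inv_rev, inv_self h32, inv_self hM2]
    calc σ₃ * (σ₃ * M) * σ₃ = (σ₃ * σ₃) * (M * σ₃) := by group
      _ = M * σ₃ := by rw [h32, one_mul]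
  have hcM : M * P * M = P⁻¹ := by
    rw [hP, mul_inv_rev, inv_self h32, inv_self hM2]
    calc M * (σ₃ * M) * M = M * σ₃ * (M * M) := by group
      _ = M * σ₃ := by rw [hM2, mul_one]
  have conj3 : ∀ x y : α, P.SameCycle (σ₃ x) (σ₃ y) ↔ P.SameCycle x y :=
    fun x y => sameCycle_conj_iff hc3 h32
  have pair3 : ∀ x, ¬ P.SameCycle x (σ₃ x) := by
    intro x
    have := pairing_core h32 hM2 h3f hMf x
    rwa [← hP] at this
  have pairM : ∀ x, ¬ P.SameCycle x (M x) := by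
    intro x
    have h := pairing_core hM2 h32 hMf h3f x
    have hMP : M * σ₃ = P⁻¹ := by
      rw [hP, mul_inv_rev, inv_self h32, inv_self hM2]
    rw [hMP, Equiv.Perm.sameCycle_inv] at h
    exact h
  have hcard3 : ∀ x : α, (orb P (σ₃ x)).card = (orb P x).card := fun x =>
    orb_card_of_conj (fun u v => conj3 u v) hid3 x
  -- pointwise descriptions of σ₁
  have e0 : σ₁ p₂ = P p₀ := by rw [hσ₁]; simp [Equiv.swap_apply_right]
  have e2 : σ₁ p₀ = P p₂ := by rw [hσ₁]; simp [Equiv.swap_apply_left]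
  have eo : ∀ z, z ≠ p₀ → z ≠ p₂ → σ₁ z = P z := by
    intro z h1 h2
    rw [hσ₁]; simp [Equiv.swap_apply_of_ne_of_ne h1 h2]
  -- P-orbits refine σ₁-orbits
  have hrefineP : ∀ x y : α, P.SameCycle x y → σ₁.SameCycle x y := by
    intro x y
    apply sameCycle_refine
    intro z
    rcases eq_or_ne z p₀ with rfl | hz0
    · rw [← e0]; exact h02cyc.trans ⟨1, by simp⟩
    rcases eq_or_ne z p₂ with rfl | hz2
    · rw [← e2]; exact h02cyc.symm.trans ⟨1, by simp⟩
    · rw [← eo z hz0 hz2]; exact ⟨1, by simp⟩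
  -- the split orbit
  have hAD : orb σ₁ p₀ = orb P p₀ ∪ orb P p₂ := by
    apply Finset.Subset.antisymm
    · intro y hy
      rw [mem_orb] at hy
      refine sameCycle_mem_of_invariant (σ := σ₁) ?_ ?_ hy
      · intro z hz
        rw [Finset.mem_union, mem_orb, mem_orb] at hz
        rcases eq_or_ne z p₀ with rfl | hz0
        · rw [Finset.mem_union]; right; rw [mem_orb, e2]; exact ⟨1, by simp⟩
        rcases eq_or_ne z p₂ with rfl | hz2
        · rw [Finset.mem_union]; left; rw [mem_orb, e0]; exact ⟨1, by simp⟩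
        · rw [Finset.mem_union]
          rw [eo z hz0 hz2]
          rcases hz with hz | hz
          · left; rw [mem_orb]; exact hz.trans ⟨1, by simp⟩
          · right; rw [mem_orb]; exact hz.trans ⟨1, by simp⟩
      · simp [Equiv.Perm.SameCycle.refl]
    · intro y hy
      rw [Finset.mem_union, mem_orb, mem_orb] at hy
      rw [mem_orb]
      rcases hy with hy | hy
      · exact hrefineP _ _ hy
      · exact h02cyc.trans (hrefineP _ _ hy)
  have hp0b : ¬ σ₁.SameCycle b p₀ := fun h => hnab (hp0a.trans h.symm)
  have hp2b : ¬ σ₁.SameCycle b p₂ := fun h => hnab ((hp0a.trans h02cyc).trans h.symm)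
  have hp0c : ¬ σ₁.SameCycle c p₀ := fun h => hnac (hp0a.trans h.symm)
  have hp2c : ¬ σ₁.SameCycle c p₂ := fun h => hnac ((hp0a.trans h02cyc).trans h.symm)
  -- untouched orbits
  have huntouched : ∀ u : α, ¬ σ₁.SameCycle u p₀ → ¬ σ₁.SameCycle u p₂ →
      orb P u = orb σ₁ u := by
    intro u hu0 hu2
    apply Finset.Subset.antisymm
    · intro y hy
      rw [mem_orb] at hy ⊢
      exact hrefineP _ _ hy
    · intro y hy
      rw [mem_orb] at hy
      refine sameCycle_mem_of_invariant (σ := σ₁) ?_ ?_ hy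
      · intro z hz
        rw [mem_orb] at hz
        have hz0 : z ≠ p₀ := by
          rintro rfl
          exact hu0 (hrefineP _ _ hz)
        have hz2 : z ≠ p₂ := by
          rintro rfl
          exact hu2 (hrefineP _ _ hz)
        rw [mem_orb, eo z hz0 hz2]
        exact hz.trans ⟨1, by simp⟩
      · simp [Equiv.Perm.SameCycle.refl]
  have hB : orb P b = orb σ₁ b := huntouched b hp0b hp2b
  have hCorb : orb P c = orb σ₁ c := huntouched c hp0c hp2c
  have hC1 : orb σ₁ c = {c} := orb_eq_singleton_of_card_one hcc
  have hC : orb P c = {c} := by rw [hCorb, hC1]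
  have horbA : orb σ₁ a = orb σ₁ p₀ := orb_eq_of_sameCycle hp0a
  set αc := (orb P p₀).card with hαc
  set βc := (orb P p₂).card with hβc
  have hμsum : μ = αc + βc := by
    rw [← hca, horbA, hAD, Finset.card_union_of_disjoint (orb_disjoint hPdiff)]
  have hαpos : 0 < αc := orb_card_pos p₀
  have hβpos : 0 < βc := orb_card_pos p₂
  have hνcard : (orb P b).card = ν := by rw [hB, hcb]
  have hnp0c : p₀ ≠ c := fun h => hp0c (by rw [h])
  have hnp2c : p₂ ≠ c := fun h => hp2c (by rw [h])
  -- location of σ₃ p₀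
  have hmemAD : ∀ w, σ₁.SameCycle a w → (P.SameCycle p₀ w ∨ P.SameCycle p₂ w) := by
    intro w hw
    have : w ∈ orb σ₁ p₀ := by rw [← horbA, mem_orb]; exact hw
    rw [hAD, Finset.mem_union, mem_orb, mem_orb] at this
    exact this
  rcases hcover (σ₃ p₀) with hloc | hloc | hloc
  · rcases hmemAD _ hloc with hX | hX
    · exact pair3 p₀ hX
    · -- CASE X : σ₃ p₀ in the orbit of p₂
      have hβα : βc = αc := by
        have h1 : orb P p₂ = orb P (σ₃ p₀) := orb_eq_of_sameCycle hX
        rw [hβc, h1, hcard3 p₀]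
      rcases hcover (σ₃ b) with hb' | hb' | hb'
      · rcases hmemAD _ hb' with hY | hY
        · -- σ₃ b ~P p₀ : contradiction
          have h1 : P.SameCycle (σ₃ b) (σ₃ (σ₃ p₀)) := by
            rw [hid3]; exact hY.symm
          rw [conj3] at h1
          exact hp2b (hrefineP _ _ (h1.trans hX.symm))
        · -- σ₃ b ~P p₂ : contradiction
          have h1 : P.SameCycle (σ₃ b) (σ₃ (σ₃ p₂)) := by
            rw [hid3]; exact hY.symm
          rw [conj3] at h1
          have h2 : P.SameCycle (σ₃ p₂) (σ₃ (σ₃ p₀)) := (conj3 _ _).2 hX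
          rw [hid3] at h2
          exact hp0b (hrefineP _ _ (h1.trans h2))
      · -- σ₃ b in orbit of b : contradiction with pairing
        have : σ₃ b ∈ orb P b := by rw [hB, mem_orb]; exact hb'
        rw [mem_orb] at this
        exact pair3 b this
      · -- DEGENERATE CASE
        have hσ₃b : σ₃ b = c := by
          have : σ₃ b ∈ orb σ₁ c := by rw [mem_orb]; exact hb'
          rw [hC1, Finset.mem_singleton] at this
          exact this
        have hbne_p0 : b ≠ p₀ := by intro h; exact hp0b (by rw [h])
        have hbne_p2 : b ≠ p₂ := by intro h; exact hp2b (by rw [h])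
        have hσ₃c : σ₃ c = b := by rw [← hσ₃b, hid3]
        have hν1 : ν = 1 := by
          have h1 : orb P (σ₃ b) = orb P c := by rw [hσ₃b]
          have h2 := hcard3 b
          rw [h1, hC, hνcard] at h2
          simpa using h2.symm
        have hBb : orb σ₁ b = {b} := orb_eq_singleton_of_card_one (by rw [hcb, hν1])
        have hPB : orb P b = {b} := by rw [hB, hBb]
        have hσ₁b : σ₁ b = b := by
          have h1 : σ₁ b ∈ orb σ₁ b := by rw [mem_orb]; exact ⟨1, by simp⟩
          rw [hBb, Finset.mem_singleton] at h1; exact h1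
        have hσ₁c : σ₁ c = c := by
          have h1 : σ₁ c ∈ orb σ₁ c := by rw [mem_orb]; exact ⟨1, by simp⟩
          rw [hC1, Finset.mem_singleton] at h1; exact h1
        have hPb : P b = b := by
          have h1 : P b ∈ orb P b := by rw [mem_orb]; exact ⟨1, by simp⟩
          rw [hPB, Finset.mem_singleton] at h1; exact h1
        have hα2 : 2 ≤ αc := by omega
        have hPMb : P (M b) = M b := by
          have h0 := DFunLike.congr_fun hcM b
          simp only [Perm.mul_apply, Perm.coe_mul, Function.comp_apply] at h0
          have hPinvb : P⁻¹ b = b := inv_apply_of_apply hPb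
          rw [hPinvb] at h0
          have h5 := congrArg (⇑M) h0
          rw [hidM] at h5
          exact h5
        have hMb : M b = c := by
          rcases hcover (M b) with hw | hw | hw
          · rcases hmemAD _ hw with hV | hV
            · have h1 : orb P p₀ = orb P (M b) := orb_eq_of_sameCycle hV
              rw [orb_of_fixed hPMb] at h1
              have : αc = 1 := by rw [hαc, h1]; simp
              omega
            · have h1 : orb P p₂ = orb P (M b) := orb_eq_of_sameCycle hV
              rw [orb_of_fixed hPMb] at h1
              have : βc = 1 := by rw [hβc, h1]; simp
              omega
          · have h1 : M b ∈ orb σ₁ b := by rw [mem_orb]; exact hw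
            rw [hBb, Finset.mem_singleton] at h1
            exact absurd h1 (hMf b)
          · have h1 : M b ∈ orb σ₁ c := by rw [mem_orb]; exact hw
            rw [hC1, Finset.mem_singleton] at h1
            exact h1
        have hMc : M c = b := by rw [← hMb, hidM]
        have hbp1 : b ≠ p₁ := by
          intro h
          have h1 : M b = p₀ := by rw [h, hp1, hidM]
          rw [hMb] at h1
          exact hnp0c h1.symm
        have hbp3 : b ≠ p₃ := by
          intro h
          have h1 : M b = p₂ := by rw [h, hp3, hidM]
          rw [hMb] at h1
          exact hnp2c h1.symm
        have hcp1 : c ≠ p₁ := by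
          intro h
          have h1 : M c = p₀ := by rw [h, hp1, hidM]
          rw [hMc] at h1
          exact hbne_p0 h1
        have hcp3 : c ≠ p₃ := by
          intro h
          have h1 : M c = p₂ := by rw [h, hp3, hidM]
          rw [hMc] at h1
          exact hbne_p2 h1
        have hσ₂b : σ₂ b = c := by
          rw [hσ₂, Perm.mul_apply, Equiv.swap_apply_of_ne_of_ne hbp1 hbp3, hMb]
        have hσ₂c : σ₂ c = b := by
          rw [hσ₂, Perm.mul_apply, Equiv.swap_apply_of_ne_of_ne hcp1 hcp3, hMc]
        obtain ⟨τ, hτmem, hτ⟩ := htrans b p₀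
        have hstab : ∀ τ' ∈ Subgroup.closure ({σ₁, σ₂} : Set (Perm α)),
            (τ' b = b ∧ τ' c = c) ∨ (τ' b = c ∧ τ' c = b) := by
          intro τ' hτ'
          induction hτ' using Subgroup.closure_induction with
          | mem g hg =>
            rcases hg with rfl | hg
            · exact Or.inl ⟨hσ₁b, hσ₁c⟩
            · rw [Set.mem_singleton_iff] at hg
              subst hg
              exact Or.inr ⟨hσ₂b, hσ₂c⟩
          | one => exact Or.inl ⟨rfl, rfl⟩
          | mul g h hgm hhm ihg ihh =>
            rcases ihg with ⟨g1, g2⟩ | ⟨g1, g2⟩ <;> rcases ihh with ⟨h1, h2⟩ | ⟨h1, h2⟩ <;>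
              simp [Perm.mul_apply, g1, g2, h1, h2]
          | inv g hgm ihg =>
            rcases ihg with ⟨g1, g2⟩ | ⟨g1, g2⟩
            · exact Or.inl ⟨inv_apply_of_apply g1, inv_apply_of_apply g2⟩
            · exact Or.inr ⟨inv_apply_of_apply g2, inv_apply_of_apply g1⟩
        rcases hstab τ hτmem with ⟨h1, _⟩ | ⟨h1, _⟩
        · rw [hτ] at h1
          exact hbne_p0 h1.symm
        · rw [hτ] at h1
          exact hnp0c h1
  · -- CASE Y : σ₃ p₀ in the orbit of b
    have hY : P.SameCycle b (σ₃ p₀) := by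
      have : σ₃ p₀ ∈ orb P b := by rw [hB, mem_orb]; exact hloc
      rw [mem_orb] at this; exact this
    have hνα : ν = αc := by
      have h1 : orb P b = orb P (σ₃ p₀) := orb_eq_of_sameCycle hY
      rw [← hνcard, h1, hcard3 p₀]
    rcases hcover (σ₃ p₂) with hz | hz | hz
    · rcases hmemAD _ hz with hW | hW
      · -- p₀ ~P σ₃ p₂
        have h1 : P.SameCycle (σ₃ p₀) (σ₃ (σ₃ p₂)) := (conj3 p₀ (σ₃ p₂)).2 hW
        rw [hid3] at h1
        have : P.SameCycle b p₂ := hY.trans h1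
        exact hp2b (hrefineP _ _ this)
      · exact pair3 p₂ hW
    · -- σ₃ p₂ ~P b
      have hW : P.SameCycle b (σ₃ p₂) := by
        have : σ₃ p₂ ∈ orb P b := by rw [hB, mem_orb]; exact hz
        rw [mem_orb] at this; exact this
      have h1 : P.SameCycle (σ₃ p₀) (σ₃ p₂) := hY.symm.trans hW
      rw [conj3] at h1
      exact hPdiff h1
    · -- σ₃ p₂ = c
      have hσ₃p₂ : σ₃ p₂ = c := by
        have : σ₃ p₂ ∈ orb σ₁ c := by rw [mem_orb]; exact hz
        rw [hC1, Finset.mem_singleton] at this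
        exact this
      have hβ1 : βc = 1 := by
        have h1 : orb P (σ₃ p₂) = orb P c := by rw [hσ₃p₂]
        have := hcard3 p₂
        rw [h1, hC] at this
        simp at this
        rw [hβc, ← this]
      omega
  · -- CASE Z : σ₃ p₀ = c
    have hσ₃p₀ : σ₃ p₀ = c := by
      have : σ₃ p₀ ∈ orb σ₁ c := by rw [mem_orb]; exact hloc
      rw [hC1, Finset.mem_singleton] at this
      exact this
    have hα1 : αc = 1 := by
      have h1 : orb P (σ₃ p₀) = orb P c := by rw [hσ₃p₀]
      have := hcard3 p₀
      rw [h1, hC] at this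
      simp at this
      rw [hαc, ← this]
    have horbp0 : orb P p₀ = {p₀} := orb_eq_singleton_of_card_one (by rw [← hαc, hα1])
    rcases hcover (σ₃ p₂) with hz | hz | hz
    · rcases hmemAD _ hz with hW | hW
      · -- σ₃ p₂ ∈ {p₀}
        have : σ₃ p₂ ∈ orb P p₀ := by rw [mem_orb]; exact hW
        rw [horbp0, Finset.mem_singleton] at this
        have : p₂ = σ₃ p₀ := by rw [← this, hid3]
        rw [hσ₃p₀] at this
        exact hnp2c this
      · exact pair3 p₂ hW
    · -- βc = ν
      have hW : P.SameCycle b (σ₃ p₂) := by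
        have : σ₃ p₂ ∈ orb P b := by rw [hB, mem_orb]; exact hz
        rw [mem_orb] at this; exact this
      have hβν : βc = ν := by
        have h1 : orb P (σ₃ p₂) = orb P b := (orb_eq_of_sameCycle hW).symm
        have := hcard3 p₂
        rw [h1, hνcard] at this
        rw [hβc, ← this]
      omega
    · have h1 : σ₃ p₂ = c := by
        have : σ₃ p₂ ∈ orb σ₁ c := by rw [mem_orb]; exact hz
        rw [hC1, Finset.mem_singleton] at this
        exact this
      have : p₂ = p₀ := by
        rw [← hid3 p₂, h1, ← hσ₃p₀, hid3]
      exact hp02 this.symm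

section FinD
variable {d : ℕ}

lemma support_card_le (σ : Perm (Fin d)) : σ.cycleType.sum ≤ d := by
  rw [Equiv.Perm.sum_cycleType]
  simpa using Finset.card_le_univ σ.support

lemma sum_fullCycleType (σ : Perm (Fin d)) : (fullCycleType σ).sum = d := by
  unfold fullCycleType
  rw [Multiset.sum_add, Multiset.sum_replicate, smul_eq_mul, mul_one]
  have := support_card_le σ
  omega

lemma filter_fullCycleType (σ : Perm (Fin d)) :
    (fullCycleType σ).filter (fun i => 2 ≤ i) = σ.cycleType := by
  unfold fullCycleType
  rw [Multiset.filter_add]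
  have h1 : σ.cycleType.filter (fun i => 2 ≤ i) = σ.cycleType :=
    Multiset.filter_eq_self.2 (fun a ha => Equiv.Perm.two_le_of_mem_cycleType ha)
  have h2 : (Multiset.replicate (d - σ.cycleType.sum) 1).filter (fun i => 2 ≤ i) = 0 := by
    apply Multiset.filter_eq_nil.2
    intro a ha
    rw [Multiset.eq_of_mem_replicate ha]
    omega
  rw [h1, h2, add_zero]

lemma all_moved {σ : Perm (Fin d)} (h : σ.cycleType.sum = d) : ∀ x, σ x ≠ x := by
  have hc : σ.support.card = d := by rw [← Equiv.Perm.sum_cycleType, h]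
  have : σ.support = Finset.univ := Finset.eq_univ_of_card _ (by simpa using hc)
  intro x
  rw [← Equiv.Perm.mem_support, this]
  exact Finset.mem_univ x

lemma sq_eq_one_of_all_two {σ : Perm (Fin d)} (hf : ∀ x, σ x ≠ x)
    (h2 : ∀ x, (orb σ x).card = 2) : σ * σ = 1 := by
  refine Equiv.ext fun x => ?_
  have := (pow_orb_card_eq (hf x)).1
  rw [h2 x] at this
  simpa [pow_succ, Perm.mul_apply] using this

lemma cover_of_card_sum {σ : Perm (Fin d)} {a b c : Fin d}
    (hnab : ¬ σ.SameCycle a b) (hnac : ¬ σ.SameCycle a c) (hnbc : ¬ σ.SameCycle b c)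
    (hsum : (orb σ a).card + (orb σ b).card + (orb σ c).card = d) :
    ∀ x, σ.SameCycle a x ∨ σ.SameCycle b x ∨ σ.SameCycle c x := by
  have hdisj1 : Disjoint (orb σ a) (orb σ b) := orb_disjoint hnab
  have hdisj2 : Disjoint (orb σ a ∪ orb σ b) (orb σ c) := by
    rw [Finset.disjoint_union_left]
    exact ⟨orb_disjoint hnac, orb_disjoint hnbc⟩
  have hcard : (orb σ a ∪ orb σ b ∪ orb σ c).card = d := by
    rw [Finset.card_union_of_disjoint hdisj2, Finset.card_union_of_disjoint hdisj1]
    exact hsum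
  have huniv : orb σ a ∪ orb σ b ∪ orb σ c = Finset.univ :=
    Finset.eq_univ_of_card _ (by simpa using hcard)
  intro x
  have : x ∈ orb σ a ∪ orb σ b ∪ orb σ c := huniv ▸ Finset.mem_univ x
  rw [Finset.mem_union, Finset.mem_union, mem_orb, mem_orb, mem_orb] at this
  tauto

end FinD

theorem main_empty (m n k : ℕ) (hm : 0 < m) (hn : 0 < n) (hmn : m ≠ n + 1) (hnm : n ≠ m + 1)
    (hk : m + n + 1 = 2 * k) (σ₁ σ₂ σ₃ : Perm (Fin (2 * k)))
    (hmul : σ₁ * σ₂ = σ₃)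
    (h1 : fullCycleType σ₁ = {m, n, 1})
    (h2 : fullCycleType σ₂ = 4 ::ₘ Multiset.replicate (k - 2) 2)
    (h3 : fullCycleType σ₃ = Multiset.replicate k 2)
    (htrans : ∀ x y : Fin (2 * k),
      ∃ τ ∈ Subgroup.closure ({σ₁, σ₂} : Set (Perm (Fin (2 * k)))), τ x = y) : False := by
  have hk2 : 2 ≤ k := by omega
  have hmne : m ≠ n := by omega
  -- σ₃ : fixed-point-free involution
  have hct3 : σ₃.cycleType = Multiset.replicate k 2 := by
    rw [← filter_fullCycleType, h3]
    exact Multiset.filter_eq_self.2 (fun a ha => by rw [Multiset.eq_of_mem_replicate ha])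
  have hsum3 : σ₃.cycleType.sum = 2 * k := by
    rw [hct3, Multiset.sum_replicate, smul_eq_mul]; omega
  have h3f := all_moved hsum3
  have horb3 : ∀ x, (orb σ₃ x).card = 2 := fun x => by
    have := orb_card_mem_cycleType (h3f x)
    rw [hct3] at this
    exact Multiset.eq_of_mem_replicate this
  have h32 := sq_eq_one_of_all_two h3f horb3
  -- σ₂ : structure
  have hct2 : σ₂.cycleType = 4 ::ₘ Multiset.replicate (k - 2) 2 := by
    rw [← filter_fullCycleType, h2]
    have hrep : (Multiset.replicate (k - 2) 2).filter (fun i => 2 ≤ i) =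
        Multiset.replicate (k - 2) 2 :=
      Multiset.filter_eq_self.2 (fun a ha => by rw [Multiset.eq_of_mem_replicate ha])
    rw [Multiset.filter_cons, if_pos (by norm_num), hrep, Multiset.singleton_add]
  have hsum2 : σ₂.cycleType.sum = 2 * k := by
    rw [hct2, Multiset.sum_cons, Multiset.sum_replicate, smul_eq_mul]; omega
  have h2f := all_moved hsum2
  obtain ⟨p₀, hp₀mov, hp₀card⟩ := exists_rep (σ := σ₂) (s := 4)
    (by rw [hct2]; exact Multiset.mem_cons_self _ _)
  set p₁ := σ₂ p₀ with hp₁def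
  set p₂ := σ₂ p₁ with hp₂def
  set p₃ := σ₂ p₂ with hp₃def
  have pow1 : (σ₂ ^ 1) p₀ = p₁ := by simp [hp₁def]
  have pow2 : (σ₂ ^ 2) p₀ = p₂ := by simp [pow_succ, Perm.mul_apply, hp₁def, hp₂def]
  have pow3 : (σ₂ ^ 3) p₀ = p₃ := by simp [pow_succ, Perm.mul_apply, hp₁def, hp₂def, hp₃def]
  have hfix4 : (σ₂ ^ 4) p₀ = p₀ := by
    have := (pow_orb_card_eq hp₀mov).1
    rwa [hp₀card] at this
  have hmin4 : ∀ i, 0 < i → i < 4 → (σ₂ ^ i) p₀ ≠ p₀ := by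
    have := (pow_orb_card_eq hp₀mov).2
    rwa [hp₀card] at this
  have s30 : σ₂ p₃ = p₀ := by
    have h := hfix4
    rw [show (4 : ℕ) = 3 + 1 from rfl, pow_succ', Perm.mul_apply, pow3] at h
    exact h
  have d01 : p₀ ≠ p₁ := fun h => hmin4 1 (by omega) (by omega) (by rw [pow1, ← h])
  have d02 : p₀ ≠ p₂ := fun h => hmin4 2 (by omega) (by omega) (by rw [pow2, ← h])
  have d03 : p₀ ≠ p₃ := fun h => hmin4 3 (by omega) (by omega) (by rw [pow3, ← h])
  have d12 : p₁ ≠ p₂ := fun h => d01 (σ₂.injective h)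
  have d13 : p₁ ≠ p₃ := fun h => d02 (σ₂.injective h)
  have d23 : p₂ ≠ p₃ := fun h => d12 (σ₂.injective h)
  have sc01 : σ₂.SameCycle p₀ p₁ := ⟨((1 : ℕ) : ℤ), by rw [zpow_natCast]; exact pow1⟩
  have sc02 : σ₂.SameCycle p₀ p₂ := ⟨((2 : ℕ) : ℤ), by rw [zpow_natCast]; exact pow2⟩
  have sc03 : σ₂.SameCycle p₀ p₃ := ⟨((3 : ℕ) : ℤ), by rw [zpow_natCast]; exact pow3⟩
  have hquadcard : ({p₀, p₁, p₂, p₃} : Finset (Fin (2 * k))).card = 4 := by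
    rw [show ({p₀, p₁, p₂, p₃} : Finset (Fin (2 * k)))
        = insert p₀ (insert p₁ (insert p₂ {p₃})) from rfl]
    rw [Finset.card_insert_of_notMem (by simp [d01, d02, d03]),
      Finset.card_insert_of_notMem (by simp [d12, d13]),
      Finset.card_insert_of_notMem (by simp [d23]), Finset.card_singleton]
  have hsubq : ({p₀, p₁, p₂, p₃} : Finset (Fin (2 * k))) ⊆ orb σ₂ p₀ := by
    intro x hx
    rw [mem_orb]
    rcases Finset.mem_insert.1 hx with rfl | hx
    · exact Equiv.Perm.SameCycle.refl _ _
    rcases Finset.mem_insert.1 hx with rfl | hx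
    · exact sc01
    rcases Finset.mem_insert.1 hx with rfl | hx
    · exact sc02
    rw [Finset.mem_singleton] at hx
    rw [hx]
    exact sc03
  have horb4 : orb σ₂ p₀ = {p₀, p₁, p₂, p₃} :=
    (Finset.eq_of_subset_of_card_le hsubq (by rw [hp₀card, hquadcard])).symm
  have hout : ∀ x, x ∉ ({p₀, p₁, p₂, p₃} : Finset (Fin (2 * k))) → σ₂ (σ₂ x) = x := by
    intro x hx
    have hnsc : ¬ σ₂.SameCycle p₀ x := fun h => hx (by rw [← horb4, mem_orb]; exact h)
    have hcardx := orb_card_mem_cycleType (h2f x)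
    rw [hct2, Multiset.mem_cons] at hcardx
    rcases hcardx with h4' | h2'
    · by_cases hcyc : σ₂.cycleOf x = σ₂.cycleOf p₀
      · exact absurd (sameCycle_of_cycleOf_eq hp₀mov hcyc).symm hnsc
      · have hcnt := count_two_le (h2f x) hp₀mov hcyc h4' hp₀card
        rw [hct2] at hcnt
        have hone : Multiset.count 4 (4 ::ₘ Multiset.replicate (k - 2) 2) = 1 := by
          rw [Multiset.count_cons_self, Multiset.count_replicate]
          norm_num
        omega
    · have hpow := (pow_orb_card_eq (h2f x)).1
      have h2'' := Multiset.eq_of_mem_replicate h2'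
      rw [h2''] at hpow
      simpa [pow_succ, Perm.mul_apply] using hpow
  have hclosed : ∀ x : Fin (2 * k), σ₂ x ∈ ({p₀, p₁, p₂, p₃} : Finset (Fin (2 * k))) →
      x ∈ ({p₀, p₁, p₂, p₃} : Finset (Fin (2 * k))) := by
    intro x hx
    simp only [Finset.mem_insert, Finset.mem_singleton] at hx ⊢
    rcases hx with h | h | h | h
    · rw [← s30] at h; exact Or.inr (Or.inr (Or.inr (σ₂.injective h)))
    · rw [hp₁def] at h; exact Or.inl (σ₂.injective h)
    · rw [hp₂def] at h; exact Or.inr (Or.inl (σ₂.injective h))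
    · rw [hp₃def] at h; exact Or.inr (Or.inr (Or.inl (σ₂.injective h)))
  set M := σ₂ * Equiv.swap p₁ p₃ with hMdef
  have mp0 : M p₀ = p₁ := by
    rw [hMdef, Perm.mul_apply, Equiv.swap_apply_of_ne_of_ne d01 d03]
  have mp1 : M p₁ = p₀ := by
    rw [hMdef, Perm.mul_apply, Equiv.swap_apply_left, s30]
  have mp2 : M p₂ = p₃ := by
    rw [hMdef, Perm.mul_apply, Equiv.swap_apply_of_ne_of_ne (Ne.symm d12) d23]
  have mp3 : M p₃ = p₂ := by
    rw [hMdef, Perm.mul_apply, Equiv.swap_apply_right, ← hp₂def]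
  have mout : ∀ x, x ∉ ({p₀, p₁, p₂, p₃} : Finset (Fin (2 * k))) → M x = σ₂ x := by
    intro x hx
    simp only [Finset.mem_insert, Finset.mem_singleton, not_or] at hx
    rw [hMdef, Perm.mul_apply, Equiv.swap_apply_of_ne_of_ne hx.2.1 hx.2.2.2]
  have hM2 : M * M = 1 := by
    refine Equiv.ext fun x => ?_
    simp only [Perm.mul_apply, Perm.one_apply]
    by_cases hx : x ∈ ({p₀, p₁, p₂, p₃} : Finset (Fin (2 * k)))
    · simp only [Finset.mem_insert, Finset.mem_singleton] at hx
      rcases hx with rfl | rfl | rfl | rfl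
      · rw [mp0, mp1]
      · rw [mp1, mp0]
      · rw [mp2, mp3]
      · rw [mp3, mp2]
    · have hx2 : σ₂ x ∉ ({p₀, p₁, p₂, p₃} : Finset (Fin (2 * k))) :=
        fun h => hx (hclosed x h)
      rw [mout x hx, mout _ hx2]
      exact hout x hx
  have hMf : ∀ x, M x ≠ x := by
    intro x
    by_cases hx : x ∈ ({p₀, p₁, p₂, p₃} : Finset (Fin (2 * k)))
    · simp only [Finset.mem_insert, Finset.mem_singleton] at hx
      rcases hx with rfl | rfl | rfl | rfl
      · rw [mp0]; exact Ne.symm d01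
      · rw [mp1]; exact d01
      · rw [mp2]; exact Ne.symm d23
      · rw [mp3]; exact d23
    · rw [mout x hx]; exact h2f x
  have hσ₂M : σ₂ = M * Equiv.swap p₁ p₃ := by
    rw [hMdef, mul_assoc, Equiv.swap_mul_self, mul_one]
  set P := σ₃ * M with hPdef
  have hswap : Equiv.swap p₁ p₃ * M = M * Equiv.swap p₀ p₂ := by
    refine Equiv.ext fun x => ?_
    simp only [Perm.mul_apply]
    by_cases hx : x ∈ ({p₀, p₁, p₂, p₃} : Finset (Fin (2 * k)))
    · simp only [Finset.mem_insert, Finset.mem_singleton] at hx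
      rcases hx with rfl | rfl | rfl | rfl
      · rw [mp0, Equiv.swap_apply_left, Equiv.swap_apply_left, mp2]
      · rw [mp1, Equiv.swap_apply_of_ne_of_ne d01 d03,
          Equiv.swap_apply_of_ne_of_ne (Ne.symm d01) d12, mp1]
      · rw [mp2, Equiv.swap_apply_right, Equiv.swap_apply_right, mp0]
      · rw [mp3, Equiv.swap_apply_of_ne_of_ne (Ne.symm d12) d23,
          Equiv.swap_apply_of_ne_of_ne (Ne.symm d03) (Ne.symm d23), mp3]
    · have hx2 : σ₂ x ∉ ({p₀, p₁, p₂, p₃} : Finset (Fin (2 * k))) :=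
        fun h => hx (hclosed x h)
      simp only [Finset.mem_insert, Finset.mem_singleton, not_or] at hx hx2
      rw [mout x (by simp only [Finset.mem_insert, Finset.mem_singleton, not_or]; exact hx)]
      rw [Equiv.swap_apply_of_ne_of_ne hx2.2.1 hx2.2.2.2,
        Equiv.swap_apply_of_ne_of_ne hx.1 hx.2.2.1]
      rw [mout x (by simp only [Finset.mem_insert, Finset.mem_singleton, not_or]; exact hx)]
  have hσ₁P : σ₁ = P * Equiv.swap p₀ p₂ := by
    have hinv2 : σ₂⁻¹ = Equiv.swap p₁ p₃ * M := by
      rw [hσ₂M, mul_inv_rev, inv_self hM2, Equiv.swap_inv]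
    calc σ₁ = σ₃ * σ₂⁻¹ := by rw [← hmul]; group
      _ = σ₃ * (Equiv.swap p₁ p₃ * M) := by rw [hinv2]
      _ = σ₃ * (M * Equiv.swap p₀ p₂) := by rw [hswap]
      _ = P * Equiv.swap p₀ p₂ := by rw [hPdef]; group
  -- σ₁ representatives
  obtain ⟨a, b, c, hnab, hnac, hnbc, hca, hcb, hcc⟩ :
      ∃ a b c : Fin (2 * k), ¬ σ₁.SameCycle a b ∧ ¬ σ₁.SameCycle a c ∧ ¬ σ₁.SameCycle b c ∧
        (orb σ₁ a).card = m ∧ (orb σ₁ b).card = n ∧ (orb σ₁ c).card = 1 := by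
    by_cases hm2 : 2 ≤ m
    · by_cases hn2 : 2 ≤ n
      · have hct1 : σ₁.cycleType = {m, n} := by
          rw [← filter_fullCycleType, h1]
          have e : ({m, n, 1} : Multiset ℕ) = m ::ₘ n ::ₘ 1 ::ₘ 0 := rfl
          rw [e]
          simp [Multiset.filter_cons, Multiset.filter_singleton, hm2, hn2]
        obtain ⟨a, hamov, hacard⟩ := exists_rep (σ := σ₁) (s := m)
          (by rw [hct1]; exact Multiset.mem_cons_self _ _)
        obtain ⟨b, hbmov, hbcard⟩ := exists_rep (σ := σ₁) (s := n) (by rw [hct1]; simp)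
        have hfixed : ∃ c, σ₁ c = c := by
          by_contra hno
          push_neg at hno
          have huniv : σ₁.support = Finset.univ :=
            Finset.eq_univ_of_forall (fun x => Equiv.Perm.mem_support.2 (hno x))
          have hcard := Equiv.Perm.sum_cycleType σ₁
          rw [hct1, huniv, Finset.card_univ] at hcard
          simp [Multiset.sum_cons] at hcard
          omega
        obtain ⟨c, hcfix⟩ := hfixed
        refine ⟨a, b, c, ?_, ?_, ?_, hacard, hbcard, by rw [orb_of_fixed hcfix]; simp⟩
        · intro h
          apply hmne
          rw [← hacard, ← hbcard, orb_eq_of_sameCycle h]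
        · intro h
          have hac := eq_of_sameCycle_fixed hcfix h
          rw [hac] at hamov
          exact hamov hcfix
        · intro h
          have hbcx := eq_of_sameCycle_fixed hcfix h
          rw [hbcx] at hbmov
          exact hbmov hcfix
      · have hn1 : n = 1 := by omega
        have hct1 : σ₁.cycleType = {m} := by
          rw [← filter_fullCycleType, h1, hn1]
          have e : ({m, 1, 1} : Multiset ℕ) = m ::ₘ 1 ::ₘ 1 ::ₘ 0 := rfl
          rw [e]
          simp [Multiset.filter_cons, Multiset.filter_singleton, hm2]
        obtain ⟨a, hamov, hacard⟩ := exists_rep (σ := σ₁) (s := m) (by rw [hct1]; simp)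
        have hsupc : σ₁.support.card = m := by
          rw [← Equiv.Perm.sum_cycleType, hct1]; simp
        have hcompl : (Finset.univ \ σ₁.support).card = 2 := by
          rw [Finset.card_sdiff_of_subset (Finset.subset_univ _), hsupc, Finset.card_univ]
          simp
          omega
        obtain ⟨b, hbmem, c, hcmem, hbc⟩ := Finset.one_lt_card.1 (by omega :
          1 < (Finset.univ \ σ₁.support).card)
        have hbfix : σ₁ b = b := Equiv.Perm.notMem_support.1 (Finset.mem_sdiff.1 hbmem).2
        have hcfix : σ₁ c = c := Equiv.Perm.notMem_support.1 (Finset.mem_sdiff.1 hcmem).2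
        refine ⟨a, b, c, ?_, ?_, ?_, hacard, by rw [orb_of_fixed hbfix, hn1]; simp,
          by rw [orb_of_fixed hcfix]; simp⟩
        · intro h
          have hab := eq_of_sameCycle_fixed hbfix h
          rw [hab] at hamov
          exact hamov hbfix
        · intro h
          have hac := eq_of_sameCycle_fixed hcfix h
          rw [hac] at hamov
          exact hamov hcfix
        · intro h
          exact hbc (eq_of_sameCycle_fixed hcfix h)
    · have hm1 : m = 1 := by omega
      have hn2 : 2 ≤ n := by omega
      have hct1 : σ₁.cycleType = {n} := by
        rw [← filter_fullCycleType, h1, hm1]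
        have e : ({1, n, 1} : Multiset ℕ) = 1 ::ₘ n ::ₘ 1 ::ₘ 0 := rfl
        rw [e]
        simp [Multiset.filter_cons, Multiset.filter_singleton, hn2]
      obtain ⟨b, hbmov, hbcard⟩ := exists_rep (σ := σ₁) (s := n) (by rw [hct1]; simp)
      have hsupc : σ₁.support.card = n := by
        rw [← Equiv.Perm.sum_cycleType, hct1]; simp
      have hcompl : (Finset.univ \ σ₁.support).card = 2 := by
        rw [Finset.card_sdiff_of_subset (Finset.subset_univ _), hsupc, Finset.card_univ]
        simp
        omega
      obtain ⟨a, hamem, c, hcmem, hac⟩ := Finset.one_lt_card.1 (by omega :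
        1 < (Finset.univ \ σ₁.support).card)
      have hafix : σ₁ a = a := Equiv.Perm.notMem_support.1 (Finset.mem_sdiff.1 hamem).2
      have hcfix : σ₁ c = c := Equiv.Perm.notMem_support.1 (Finset.mem_sdiff.1 hcmem).2
      refine ⟨a, b, c, ?_, ?_, ?_, by rw [orb_of_fixed hafix, hm1]; simp, hbcard,
        by rw [orb_of_fixed hcfix]; simp⟩
      · intro h
        have hba := eq_of_sameCycle_fixed hafix h.symm
        rw [hba] at hbmov
        exact hbmov hafix
      · intro h
        exact hac (eq_of_sameCycle_fixed hcfix h)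
      · intro h
        have hbcx := eq_of_sameCycle_fixed hcfix h
        rw [hbcx] at hbmov
        exact hbmov hcfix
  have hcover := cover_of_card_sum hnab hnac hnbc (by rw [hca, hcb, hcc]; omega)
  have hc3 : σ₃ * P * σ₃ = P⁻¹ := by
    rw [hPdef, mul_inv_rev, inv_self h32, inv_self hM2]
    calc σ₃ * (σ₃ * M) * σ₃ = (σ₃ * σ₃) * (M * σ₃) := by group
      _ = M * σ₃ := by rw [h32, one_mul]
  have hid3 : ∀ u, σ₃ (σ₃ u) = u := perm_sq_apply h32
  have pi1 : ∀ x, ¬ P.SameCycle x (σ₃ x) := by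
    intro x
    have := pairing_core h32 hM2 h3f hMf x
    rwa [← hPdef] at this
  have conj3 : ∀ x y : Fin (2 * k), P.SameCycle (σ₃ x) (σ₃ y) ↔ P.SameCycle x y :=
    fun x y => sameCycle_conj_iff hc3 h32
  by_cases hPsame : P.SameCycle p₀ p₂
  · exact caseI_core hσ₁P hPsame pi1 conj3 hid3 hnab hnac hnbc hca hcb hcc hcover hmne hmn hnm
  · have h02cyc : σ₁.SameCycle p₀ p₂ := by
      rw [hσ₁P]; exact dichotomy hPsame
    rcases hcover p₀ with hw | hw | hw
    · exact caseII_core hPdef hσ₁P hσ₂M hM2 hMf h32 h3f mp0.symm mp2.symm d02 hPsame h02cyc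
        hnab hnac hnbc hca hcb hcc hcover hmn hnm hw htrans
    · have hcover' : ∀ x, σ₁.SameCycle b x ∨ σ₁.SameCycle a x ∨ σ₁.SameCycle c x := fun x => by
        rcases hcover x with h | h | h <;> tauto
      exact caseII_core hPdef hσ₁P hσ₂M hM2 hMf h32 h3f mp0.symm mp2.symm d02 hPsame h02cyc
        (fun h => hnab h.symm) hnbc hnac hcb hca hcc hcover' hnm hmn hw htrans
    · have hc1 : orb σ₁ c = {c} := orb_eq_singleton_of_card_one hcc
      have hp0 : p₀ ∈ orb σ₁ c := by rw [mem_orb]; exact hw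
      have hp2' : p₂ ∈ orb σ₁ c := by rw [mem_orb]; exact hw.trans h02cyc
      rw [hc1, Finset.mem_singleton] at hp0 hp2'
      exact d02 (hp0.trans hp2'.symm)

end Helpers

/-- Proposition 2.3, row 8: for `|m - n| ≠ 1` with `m + n + 1 = 2k`, there is no
transitive triple `(σ₁, σ₂, σ₃)` in `S_{2k}` with `σ₁σ₂ = σ₃`, `σ₁` of cycle type
`(m, n, 1)`, `σ₂` of cycle type `(4, 2, …, 2)` and `σ₃` a fixed-point-free involution;
in particular the number of such triples up to simultaneous conjugation is `0`. -/
theorem hurwitz_count_row8 (m n k : ℕ) (hm : 0 < m) (hn : 0 < n)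
    (hmn : m ≠ n + 1) (hnm : n ≠ m + 1) (hk : m + n + 1 = 2 * k) :
    HurwitzTriples (2 * k) {m, n, 1} (4 ::ₘ Multiset.replicate (k - 2) 2)
      (Multiset.replicate k 2) = ∅ ∧
    Nat.card (Quot (SimConj
      (HurwitzTriples (2 * k) {m, n, 1} (4 ::ₘ Multiset.replicate (k - 2) 2)
        (Multiset.replicate k 2)))) = 0 := by
  have hempty : HurwitzTriples (2 * k) {m, n, 1} (4 ::ₘ Multiset.replicate (k - 2) 2)
      (Multiset.replicate k 2) = ∅ := by
    rw [Set.eq_empty_iff_forall_notMem]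
    rintro ⟨σ₁, σ₂, σ₃⟩ ⟨hmul, hf1, hf2, hf3, htr⟩
    exact main_empty m n k hm hn hmn hnm hk σ₁ σ₂ σ₃ hmul hf1 hf2 hf3 htr
  refine ⟨hempty, ?_⟩
  haveI : IsEmpty ↥(HurwitzTriples (2 * k) {m, n, 1} (4 ::ₘ Multiset.replicate (k - 2) 2)
      (Multiset.replicate k 2)) := Set.isEmpty_coe_sort.2 hempty
  exact Nat.card_of_isEmpty
end

section
/- Let k be a positive integer. The number of simultaneous-conjugacy classes of transitive triples (\sigma_1, \sigma_2, \sigma_3) in S_{2k+1} with \sigma_1 \circ \sigma_2 = \sigma_3 such that \sigma_1 is a (2k+1)-cycle and both \sigma_2 and \sigma_3 have cycle type (2, \ldots, 2, 1) consisting of k transpositions and one fixed point, equals 1. -/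
namespace Row10

open Fin.NatCast Fin.CommRing

variable {k : ℕ}

/-- The standard `(2k+1)`-cycle `x ↦ 1 + x`. -/
def cc (k : ℕ) : Equiv.Perm (Fin (2*k+1)) := Equiv.addLeft 1

/-- The standard reflection `x ↦ -x`. -/
def rr (k : ℕ) : Equiv.Perm (Fin (2*k+1)) := Equiv.neg _

lemma cc_apply (x : Fin (2*k+1)) : cc k x = 1 + x := rfl
lemma rr_apply (x : Fin (2*k+1)) : rr k x = -x := rfl

lemma cc_pow_apply (m : ℕ) (x : Fin (2*k+1)) : ((cc k)^m) x = (m : Fin (2*k+1)) + x := by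
  induction m with
  | zero => simp
  | succ i ih => rw [pow_succ', Equiv.Perm.mul_apply, ih, cc_apply]; push_cast; ring

lemma one_ne_zero' (hk : 0 < k) : (1 : Fin (2*k+1)) ≠ 0 := by
  have h1 : (1 : Fin (2*k+1)).val = 1 % (2*k+1) := Fin.val_one' _
  have : (1 : Fin (2*k+1)).val = 1 := by rw [h1]; apply Nat.mod_eq_of_lt; omega
  intro h; rw [h] at this; simp at this

lemma two_inv (hk : 0 < k) : (2 : Fin (2*k+1)) * ((k+1 : ℕ) : Fin (2*k+1)) = 1 := by
  have : ((2*(k+1) : ℕ) : Fin (2*k+1)) = ((2*k+1 : ℕ) : Fin (2*k+1)) + 1 := by push_cast; ring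
  rw [Fin.natCast_self] at this
  push_cast at this
  rw [zero_add] at this
  push_cast
  linear_combination this

lemma support_cc (hk : 0 < k) : (cc k).support = Finset.univ := by
  ext x
  simp only [Equiv.Perm.mem_support, Finset.mem_univ, iff_true, cc_apply]
  intro h
  have : (1 : Fin (2*k+1)) = 0 := by linear_combination h
  exact one_ne_zero' hk this

lemma isCycle_cc (hk : 0 < k) : (cc k).IsCycle := by
  refine ⟨0, ?_, ?_⟩
  · rw [cc_apply]; simpa using (one_ne_zero' hk)
  · intro y _
    refine ⟨(y.val : ℤ), ?_⟩
    rw [zpow_natCast, cc_pow_apply]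
    simp [Fin.cast_val_eq_self]

lemma cycleType_cc (hk : 0 < k) : (cc k).cycleType = {2*k+1} := by
  rw [(isCycle_cc hk).cycleType, support_cc hk]
  simp

lemma cycleType_invol {d : ℕ} {σ : Equiv.Perm (Fin d)} (h : σ * σ = 1) :
    σ.cycleType = Multiset.replicate σ.cycleType.card 2 ∧
      2 * σ.cycleType.card = σ.support.card := by
  have horder : orderOf σ ∣ 2 := orderOf_dvd_of_pow_eq_one (by rw [pow_two]; exact h)
  have hall : ∀ x ∈ σ.cycleType, x = 2 := by
    intro x hx
    have h2 : 2 ≤ x := Equiv.Perm.two_le_of_mem_cycleType hx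
    have hdvd : x ∣ 2 := dvd_trans (Multiset.dvd_lcm hx)
      (by rw [Equiv.Perm.lcm_cycleType]; exact horder)
    have := Nat.le_of_dvd (by norm_num) hdvd
    omega
  constructor
  · exact Multiset.eq_replicate_card.mpr hall
  · have := Equiv.Perm.sum_cycleType σ
    rw [Multiset.eq_replicate_card.mpr hall] at this
    rw [← this]
    simp [Multiset.sum_replicate, mul_comm]

lemma support_reflection (hk : 0 < k) (σ : Equiv.Perm (Fin (2*k+1))) (a : Fin (2*k+1))
    (ha : ∀ x, σ x = a - x) :
    σ.support = {((k+1:ℕ) : Fin (2*k+1)) * a}ᶜ := by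
  have ht := two_inv hk
  ext x
  simp only [Equiv.Perm.mem_support, Finset.mem_compl, Finset.mem_singleton, ha]
  constructor
  · intro h hx
    apply h
    rw [hx]
    have : (2:Fin (2*k+1)) * (((k+1:ℕ) : Fin (2*k+1)) * a) = a := by
      calc (2:Fin (2*k+1)) * (((k+1:ℕ) : Fin (2*k+1)) * a)
          = (2 * ((k+1:ℕ) : Fin (2*k+1))) * a := by ring
      _ = a := by rw [ht]; ring
    linear_combination -this
  · intro hx h
    apply hx
    have h2 : 2 * x = a := by linear_combination -h
    calc x = (2 * ((k+1:ℕ) : Fin (2*k+1))) * x := by rw [ht]; ring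
    _ = ((k+1:ℕ) : Fin (2*k+1)) * (2 * x) := by ring
    _ = ((k+1:ℕ) : Fin (2*k+1)) * a := by rw [h2]

lemma card_compl_singleton (x : Fin (2*k+1)) :
    ({x}ᶜ : Finset (Fin (2*k+1))).card = 2*k := by
  rw [Finset.card_compl]
  simp

lemma one_not_mem_cycleType {d : ℕ} (σ : Equiv.Perm (Fin d)) : 1 ∉ σ.cycleType := by
  intro h
  have := Equiv.Perm.two_le_of_mem_cycleType h
  omega

lemma cycleType_of_full_singleton {σ : Equiv.Perm (Fin (2*k+1))} (hk : 0 < k)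
    (h : fullCycleType σ = {2*k+1}) : σ.cycleType = {2*k+1} := by
  unfold fullCycleType at h
  rcases Nat.eq_zero_or_pos (2*k+1 - σ.cycleType.sum) with h0 | hpos
  · rw [h0] at h; simpa using h
  · exfalso
    have h1 : (1:ℕ) ∈ σ.cycleType + Multiset.replicate (2*k+1 - σ.cycleType.sum) 1 := by
      rw [Multiset.mem_add]
      right
      exact Multiset.mem_replicate.mpr ⟨by omega, rfl⟩
    rw [h, Multiset.mem_singleton] at h1
    omega

lemma cycleType_of_full_invol {σ : Equiv.Perm (Fin (2*k+1))} (hk : 0 < k)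
    (h : fullCycleType σ = Multiset.replicate k 2 + {1}) :
    σ.cycleType = Multiset.replicate k 2 := by
  unfold fullCycleType at h
  have hcount := congrArg (Multiset.count 1) h
  simp only [Multiset.count_add, Multiset.count_replicate] at hcount
  have hc0 : Multiset.count 1 σ.cycleType = 0 :=
    Multiset.count_eq_zero.mpr (one_not_mem_cycleType σ)
  rw [hc0] at hcount
  simp at hcount
  rw [hcount] at h
  have : Multiset.replicate 1 1 = ({1} : Multiset ℕ) := by simp
  rw [this] at h
  exact add_right_cancel h

lemma sq_eq_one_of_cycleType {σ : Equiv.Perm (Fin (2*k+1))} (hk : 0 < k)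
    (h : σ.cycleType = Multiset.replicate k 2) : σ * σ = 1 := by
  have hlcm : σ.cycleType.lcm = 2 := by
    rw [h]
    apply Nat.dvd_antisymm
    · apply Multiset.lcm_dvd.mpr
      intro x hx
      rw [Multiset.eq_of_mem_replicate hx]
    · exact Multiset.dvd_lcm (Multiset.mem_replicate.mpr ⟨by omega, rfl⟩)
  have ho : orderOf σ = 2 := by rw [← Equiv.Perm.lcm_cycleType, hlcm]
  have := pow_orderOf_eq_one σ
  rw [ho, pow_two] at this
  exact this

lemma cc_inv : (cc k)⁻¹ = Equiv.addLeft (-1 : Fin (2*k+1)) := by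
  rw [show (cc k)⁻¹ = (cc k).symm from rfl]
  exact Equiv.addLeft_symm 1

lemma cc_inv_apply (x : Fin (2*k+1)) : (cc k)⁻¹ x = -1 + x := by rw [cc_inv]; rfl

lemma rr_mul_cc : rr k * cc k = (cc k)⁻¹ * rr k := by
  ext x
  rw [Equiv.Perm.mul_apply, Equiv.Perm.mul_apply, cc_inv_apply, rr_apply, rr_apply, cc_apply]
  ring

lemma eq_add_const {π : Equiv.Perm (Fin (2*k+1))} (h : π * cc k = cc k * π) (x : Fin (2*k+1)) :
    π x = x + π 0 := by
  have key : ∀ y, π (1 + y) = 1 + π y := by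
    intro y
    have := Equiv.ext_iff.mp h y
    rwa [Equiv.Perm.mul_apply, Equiv.Perm.mul_apply, cc_apply, cc_apply] at this
  have hm : ∀ m : ℕ, π (m : Fin (2*k+1)) = (m : Fin (2*k+1)) + π 0 := by
    intro m
    induction m with
    | zero => simp
    | succ i ih =>
      have : ((i+1 : ℕ) : Fin (2*k+1)) = 1 + (i : Fin (2*k+1)) := by push_cast; ring
      rw [this, key, ih]
      ring
  calc π x = π ((x.val : ℕ) : Fin (2*k+1)) := by rw [Fin.cast_val_eq_self]
  _ = ((x.val : ℕ) : Fin (2*k+1)) + π 0 := hm _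
  _ = x + π 0 := by rw [Fin.cast_val_eq_self]

lemma rr_sq : rr k * rr k = 1 := by
  ext x
  rw [Equiv.Perm.mul_apply, rr_apply, rr_apply, neg_neg, Equiv.Perm.one_apply]

lemma fullCycleType_cc (hk : 0 < k) : fullCycleType (cc k) = {2*k+1} := by
  unfold fullCycleType
  rw [cycleType_cc hk]
  simp

lemma fullCycleType_of_refl (hk : 0 < k) (σ : Equiv.Perm (Fin (2*k+1))) (a : Fin (2*k+1))
    (ha : ∀ x, σ x = a - x) :
    fullCycleType σ = Multiset.replicate k 2 + {1} := by
  have hsq : σ * σ = 1 := by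
    ext x
    rw [Equiv.Perm.mul_apply, ha, ha, Equiv.Perm.one_apply]
    ring
  obtain ⟨hct, hcard⟩ := cycleType_invol hsq
  have hsupp : σ.support.card = 2*k := by
    rw [support_reflection hk σ a ha, card_compl_singleton]
  rw [hsupp] at hcard
  have hk' : σ.cycleType.card = k := by omega
  rw [hk'] at hct
  unfold fullCycleType
  rw [hct]
  have hsum : (Multiset.replicate k 2).sum = 2*k := by
    simp [Multiset.sum_replicate, mul_comm]
  rw [hsum]
  have : 2*k+1 - 2*k = 1 := by omega
  rw [this]
  simp

lemma transitive_cc_rr : IsTransitivePair (cc k) (rr k) := by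
  intro x y
  refine ⟨(cc k)^((y - x).val), ?_, ?_⟩
  · exact Subgroup.pow_mem _ (Subgroup.subset_closure (by simp)) _
  · rw [cc_pow_apply, Fin.cast_val_eq_self]
    ring

lemma existence (hk : 0 < k) :
    (cc k, rr k, cc k * rr k) ∈ HurwitzTriples (2*k+1) {2*k+1}
      (Multiset.replicate k 2 + {1}) (Multiset.replicate k 2 + {1}) := by
  refine ⟨rfl, fullCycleType_cc hk, ?_, ?_, transitive_cc_rr⟩
  · exact fullCycleType_of_refl hk (rr k) 0 (fun x => by rw [rr_apply]; ring)
  · exact fullCycleType_of_refl hk (cc k * rr k) 1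
      (fun x => by rw [Equiv.Perm.mul_apply, rr_apply, cc_apply]; ring)

lemma uniqueness (hk : 0 < k)
    {p : Equiv.Perm (Fin (2*k+1)) × Equiv.Perm (Fin (2*k+1)) × Equiv.Perm (Fin (2*k+1))}
    (hp : p ∈ HurwitzTriples (2*k+1) {2*k+1}
      (Multiset.replicate k 2 + {1}) (Multiset.replicate k 2 + {1})) :
    ∃ τ : Equiv.Perm (Fin (2*k+1)),
      cc k = τ * p.1 * τ⁻¹ ∧ rr k = τ * p.2.1 * τ⁻¹ ∧ cc k * rr k = τ * p.2.2 * τ⁻¹ := by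
  obtain ⟨hmul, h1, h2, h3, -⟩ := hp
  -- conjugate σ₁ to the standard cycle
  have hc1 : p.1.cycleType = {2*k+1} := cycleType_of_full_singleton hk h1
  have hconj : IsConj p.1 (cc k) :=
    Equiv.Perm.isConj_iff_cycleType_eq.mpr (by rw [hc1, cycleType_cc hk])
  obtain ⟨τ₀, hτ₀⟩ := isConj_iff.mp hconj
  obtain ⟨σ₂', hσ₂'⟩ : ∃ s : Equiv.Perm (Fin (2*k+1)), s = τ₀ * p.2.1 * τ₀⁻¹ := ⟨_, rfl⟩
  have hct2 : σ₂'.cycleType = Multiset.replicate k 2 := by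
    rw [hσ₂', Equiv.Perm.cycleType_conj]
    exact cycleType_of_full_invol hk h2
  have hsq2 : σ₂' * σ₂' = 1 := sq_eq_one_of_cycleType hk hct2
  have hcs : cc k * σ₂' = τ₀ * p.2.2 * τ₀⁻¹ := by
    rw [← hmul, ← hτ₀, hσ₂']
    group
  have hsq3 : (cc k * σ₂') * (cc k * σ₂') = 1 := by
    apply sq_eq_one_of_cycleType hk
    rw [hcs, Equiv.Perm.cycleType_conj]
    exact cycleType_of_full_invol hk h3
  -- σ₂' * (cc k)⁻¹ = cc k * σ₂'
  have i2 : σ₂'⁻¹ = σ₂' := inv_eq_of_mul_eq_one_right hsq2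
  have i3 : (cc k * σ₂')⁻¹ = cc k * σ₂' := inv_eq_of_mul_eq_one_right hsq3
  rw [mul_inv_rev, i2] at i3
  -- π := σ₂' * rr commutes with cc
  have hπc : (σ₂' * rr k) * cc k = cc k * (σ₂' * rr k) := by
    calc (σ₂' * rr k) * cc k = σ₂' * (rr k * cc k) := by group
    _ = σ₂' * ((cc k)⁻¹ * rr k) := by rw [rr_mul_cc]
    _ = (σ₂' * (cc k)⁻¹) * rr k := by group
    _ = (cc k * σ₂') * rr k := by rw [i3]
    _ = cc k * (σ₂' * rr k) := by group
  obtain ⟨b, hb⟩ : ∃ b : Fin (2*k+1), b = (σ₂' * rr k) 0 := ⟨_, rfl⟩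
  have hform : ∀ x, σ₂' x = b - x := by
    intro x
    have h1' : σ₂' = (σ₂' * rr k) * rr k := by
      rw [mul_assoc, rr_sq, mul_one]
    conv_lhs => rw [h1', Equiv.Perm.mul_apply, rr_apply, eq_add_const hπc (-x), ← hb]
    ring
  -- now conjugate by addLeft j where 2j = -b
  obtain ⟨j, hj⟩ : ∃ j : Fin (2*k+1), j = ((k+1:ℕ) : Fin (2*k+1)) * (-b) := ⟨_, rfl⟩
  have h2j : 2 * j = -b := by
    calc 2 * j = (2 * ((k+1:ℕ) : Fin (2*k+1))) * (-b) := by rw [hj]; ring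
    _ = -b := by rw [two_inv hk]; ring
  obtain ⟨τ₁, hτ₁⟩ : ∃ t : Equiv.Perm (Fin (2*k+1)), t = Equiv.addLeft j := ⟨_, rfl⟩
  have hA : τ₁ * cc k = cc k * τ₁ := by
    refine Equiv.ext fun x => ?_
    rw [Equiv.Perm.mul_apply, Equiv.Perm.mul_apply, cc_apply, cc_apply, hτ₁]
    simp only [Equiv.coe_addLeft]
    ring
  have hB : τ₁ * σ₂' = rr k * τ₁ := by
    refine Equiv.ext fun x => ?_
    rw [Equiv.Perm.mul_apply, Equiv.Perm.mul_apply, hform, rr_apply, hτ₁]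
    simp only [Equiv.coe_addLeft]
    linear_combination h2j
  have hCCC : τ₁ * cc k * τ₁⁻¹ = cc k := mul_inv_eq_iff_eq_mul.mpr hA
  have hRRR : τ₁ * σ₂' * τ₁⁻¹ = rr k := mul_inv_eq_iff_eq_mul.mpr hB
  refine ⟨τ₁ * τ₀, ?_, ?_, ?_⟩
  · have h' : (τ₁ * τ₀) * p.1 * (τ₁ * τ₀)⁻¹ = τ₁ * (τ₀ * p.1 * τ₀⁻¹) * τ₁⁻¹ := by group
    rw [h', hτ₀, hCCC]
  · have h' : (τ₁ * τ₀) * p.2.1 * (τ₁ * τ₀)⁻¹ = τ₁ * σ₂' * τ₁⁻¹ := by rw [hσ₂']; group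
    rw [h', hRRR]
  · have h' : (τ₁ * τ₀) * p.2.2 * (τ₁ * τ₀)⁻¹ = τ₁ * (cc k * σ₂') * τ₁⁻¹ := by
      rw [hcs]; group
    have h'' : τ₁ * (cc k * σ₂') * τ₁⁻¹ = (τ₁ * cc k * τ₁⁻¹) * (τ₁ * σ₂' * τ₁⁻¹) := by group
    rw [h', h'', hCCC, hRRR]

end Row10


/-- Proposition 2.3, row 10: the number of simultaneous-conjugacy classes of transitive
triples `(σ₁, σ₂, σ₃)` in `S_{2k+1}` with `σ₁σ₂ = σ₃`, `σ₁` a `(2k+1)`-cycle and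
`σ₂, σ₃` of cycle type `(2, …, 2, 1)` equals `1`. -/
theorem hurwitz_count_row10 (k : ℕ) (hk : 0 < k) :
    Nat.card (Quot (SimConj
      (HurwitzTriples (2 * k + 1) {2 * k + 1} (Multiset.replicate k 2 + {1})
        (Multiset.replicate k 2 + {1})))) = 1 := by
  obtain ⟨p0, hp0⟩ : ∃ p0 : (HurwitzTriples (2 * k + 1) {2 * k + 1}
      (Multiset.replicate k 2 + {1}) (Multiset.replicate k 2 + {1})),
      p0.val = (Row10.cc k, Row10.rr k, Row10.cc k * Row10.rr k) :=
    ⟨⟨(Row10.cc k, Row10.rr k, Row10.cc k * Row10.rr k), Row10.existence hk⟩, rfl⟩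
  rw [Nat.card_eq_one_iff_unique]
  refine ⟨⟨fun a b => ?_⟩, ⟨Quot.mk _ p0⟩⟩
  induction a using Quot.ind with | _ pa => ?_
  induction b using Quot.ind with | _ pb => ?_
  have key : ∀ pc : (HurwitzTriples (2 * k + 1) {2 * k + 1} (Multiset.replicate k 2 + {1})
      (Multiset.replicate k 2 + {1})),
      Quot.mk (SimConj _) pc = Quot.mk (SimConj _) p0 := by
    intro pc
    apply Quot.sound
    obtain ⟨τ, h1, h2, h3⟩ := Row10.uniqueness hk pc.2
    refine ⟨τ, ?_, ?_, ?_⟩ <;> rw [hp0]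
    · exact h1
    · exact h2
    · exact h3
  rw [key pa, key pb]
end

section
/- For every positive integer i, the identity \sum_{s=0}^{i-1} (i-s)(i-s-1)\,\binom{2i}{s} = i\,\bigl(2^{2i-2} - \binom{2i-1}{i}\bigr) holds. -/
/-!
With `n = 2i - 1`, Pascal's rule and `2i·C(n, s) = (s + 1)·C(2i, s + 1)` give
`(i - s - 1)·C(2i, s + 1) = i·(C(n, s + 1) - C(n, s))`. Hence the partial sums telescope:
`∑_{s ≤ m} (i - s)(i - s - 1)·C(2i, s) = i·(∑_{s ≤ m} C(n, s) + (i - m - 2)·C(n, m))`.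
At `m = i - 1` the first sum is half of `2^n`, and `C(n, i - 1) = C(n, i)`.
-/

open Finset

theorem sub_succ_mul_choose_two_mul {R : Type*} [CommRing R] {i : ℕ} (hi : 0 < i) (k : ℕ) :
    ((i : R) - (k + 1)) * (2 * i).choose (k + 1) =
      i * ((2 * i - 1).choose (k + 1) - (2 * i - 1).choose k) := by
  obtain ⟨n, hn⟩ : ∃ n, 2 * i = n + 1 := ⟨2 * i - 1, by omega⟩
  have habsorb : 2 * (i : R) * n.choose k = (2 * i).choose (k + 1) * (k + 1) := by
    have := congrArg (Nat.cast : ℕ → R) (hn ▸ Nat.add_one_mul_choose_eq n k)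
    push_cast at this
    exact this
  rw [hn, Nat.choose_succ_succ'] at habsorb ⊢
  rw [Nat.add_sub_cancel]
  push_cast at habsorb ⊢
  linear_combination habsorb

theorem sum_range_sub_mul_sub_one_mul_choose_two_mul {R : Type*} [CommRing R] {i : ℕ}
    (hi : 0 < i) (m : ℕ) :
    ∑ s ∈ range (m + 1), ((i : R) - s) * ((i : R) - s - 1) * (2 * i).choose s =
      i * (∑ s ∈ range (m + 1), ((2 * i - 1).choose s : R) +
        ((i : R) - m - 2) * (2 * i - 1).choose m) := by
  induction m with
  | zero =>
    simp only [zero_add, range_one, sum_singleton, Nat.cast_zero, sub_zero, Nat.choose_zero_right,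
      Nat.cast_one, mul_one]
    ring
  | succ m ih =>
    rw [sum_range_succ, ih, sum_range_succ _ (m + 1)]
    push_cast
    linear_combination ((i : R) - m - 2) * sub_succ_mul_choose_two_mul (R := R) hi m

/-- The count in the proof of Proposition 4.3: for every positive integer `i`,
`∑_{s=0}^{i-1} (i-s)(i-s-1)·C(2i, s) = i·(2^(2i-2) - C(2i-1, i))`. -/
theorem sum_A1_count (i : ℕ) (hi : 0 < i) :
    (∑ s ∈ Finset.range i, ((i : ℚ) - s) * ((i : ℚ) - s - 1) * Nat.choose (2 * i) s) =
      (i : ℚ) * (2 ^ (2 * i - 2) - Nat.choose (2 * i - 1) i) := by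
  obtain ⟨m, rfl⟩ : ∃ m, i = m + 1 := ⟨i - 1, by omega⟩
  have hodd : 2 * (m + 1) - 1 = 2 * m + 1 := by omega
  have hhalf : (∑ s ∈ range (m + 1), ((2 * m + 1).choose s : ℚ)) = 2 ^ (2 * m) := by
    rw [pow_mul]; exact_mod_cast Nat.sum_range_choose_halfway m
  rw [sum_range_sub_mul_sub_one_mul_choose_two_mul (by omega), hodd, hhalf,
    Nat.choose_symm_half, show 2 * (m + 1) - 2 = 2 * m by omega]
  push_cast
  ring
end
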